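/- arXiv:1708.03861 — 8 statements merged into one kernel-verified Lean document; each statement's English description precedes it below -/
import Mathlib

section
/- Let X and Y be independent nonnegative real-valued random variables on a probability space such that ln(1 + X/(Y+1)) is integrable. Then E[ln(1 + X/(Y+1))] = ∫₀^∞ (e^{−z}/z) · (1 − E[e^{−zX}]) · E[e^{−zY}] dz. -/
open MeasureTheory ProbabilityTheory Real
open Set

lemma exp_Ioc_int {a b z : ℝ} (hab : a ≤ b) (hz : 0 < z) :
    ∫ t in Ioc a b, Real.exp (-(t*z)) = (Real.exp (-(a*z)) - Real.exp (-(b*z)))/z := by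
  rw [← intervalIntegral.integral_of_le hab]
  have : ∀ t ∈ Set.uIcc a b, HasDerivAt (fun t => -Real.exp (-(t*z))/z) (Real.exp (-(t*z))) t := by
    intro t _
    have h1 : HasDerivAt (fun t : ℝ => -(t*z)) (-z) t := by
      simpa [Pi.neg_def] using ((hasDerivAt_id t).mul_const z).neg
    have h2 := (h1.exp).neg.div_const z
    exact h2.congr_deriv (by field_simp)
  rw [intervalIntegral.integral_eq_sub_of_hasDerivAt this
    (Continuous.intervalIntegrable (by fun_prop) a b)]
  ring

lemma exp_Ioi_int {t : ℝ} (ht : 0 < t) :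
    ∫ z in Ioi (0:ℝ), Real.exp (-(t*z)) = 1/t := by
  have := integral_comp_mul_left_Ioi (fun x => Real.exp (-x)) 0 ht
  simp only [mul_zero, integral_exp_neg_Ioi, neg_zero, Real.exp_zero, smul_eq_mul, mul_one] at this
  rw [this]; simp [one_div]

lemma frullani_lintegral {a b : ℝ} (ha : 0 < a) (hab : a ≤ b) :
    ∫⁻ z in Ioi (0:ℝ), ENNReal.ofReal ((Real.exp (-(a*z)) - Real.exp (-(b*z)))/z)
      = ENNReal.ofReal (Real.log (b/a)) := by
  have hb : 0 < b := lt_of_lt_of_le ha hab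
  -- step 1 : rewrite integrand as inner lintegral
  have step1 : ∀ z ∈ Ioi (0:ℝ),
      ENNReal.ofReal ((Real.exp (-(a*z)) - Real.exp (-(b*z)))/z)
        = ∫⁻ t in Ioc a b, ENNReal.ofReal (Real.exp (-(t*z))) := by
    intro z hz
    rw [← exp_Ioc_int hab hz]
    rw [ofReal_integral_eq_lintegral_ofReal]
    · exact (Continuous.integrableOn_Ioc (by fun_prop))
    · exact Filter.Eventually.of_forall fun t => (Real.exp_pos _).le
  rw [setLIntegral_congr_fun measurableSet_Ioi
    step1]
  -- step 2 : swap
  rw [lintegral_lintegral_swap]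
  · -- step 3 : inner integral in z
    have step3 : ∀ t ∈ Ioc a b,
        ∫⁻ z in Ioi (0:ℝ), ENNReal.ofReal (Real.exp (-(t*z))) = ENNReal.ofReal (1/t) := by
      intro t ht
      have ht0 : 0 < t := lt_of_lt_of_le ha ht.1.le
      rw [← exp_Ioi_int ht0, ofReal_integral_eq_lintegral_ofReal]
      · have := exp_neg_integrableOn_Ioi (0:ℝ) ht0
        simpa [neg_mul, IntegrableOn] using this
      · exact Filter.Eventually.of_forall fun z => (Real.exp_pos _).le
    rw [setLIntegral_congr_fun measurableSet_Ioc step3]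
    -- step 4
    have h0 : (0:ℝ) ∉ Set.uIcc a b := by
      rw [Set.uIcc_of_le hab]; intro h; exact absurd h.1 (not_le.2 ha)
    have hint : IntegrableOn (fun t : ℝ => 1/t) (Ioc a b) := by
      refine (intervalIntegral.intervalIntegrable_one_div (f := fun x => x)
        (fun x hx => ?_) (by fun_prop)).1
      intro h; exact h0 (h ▸ hx)
    rw [← ofReal_integral_eq_lintegral_ofReal hint ?_]
    · rw [← intervalIntegral.integral_of_le hab, integral_one_div h0]
    · filter_upwards [ae_restrict_mem measurableSet_Ioc] with t ht
      exact (div_pos one_pos (lt_trans ha ht.1)).le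
  · apply Measurable.aemeasurable
    apply Measurable.ennreal_ofReal
    fun_prop

/-- For independent nonnegative real random variables `X` and `Y`
on a probability space such that `ln (1 + X / (Y + 1))` is integrable,
`E[ln (1 + X/(Y+1))] = ∫₀^∞ (e^{-z}/z) (1 - E[e^{-zX}]) E[e^{-zY}] dz`. -/
theorem expectation_log_one_add_div
    {Ω : Type*} [MeasurableSpace Ω] {μ : Measure Ω} [IsProbabilityMeasure μ]
    (X Y : Ω → ℝ) (hX : Measurable X) (hY : Measurable Y)
    (hXpos : ∀ ω, 0 ≤ X ω) (hYpos : ∀ ω, 0 ≤ Y ω)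
    (hindep : IndepFun X Y μ)
    (hint : Integrable (fun ω => Real.log (1 + X ω / (Y ω + 1))) μ) :
    ∫ ω, Real.log (1 + X ω / (Y ω + 1)) ∂μ
      = ∫ z in Set.Ioi (0 : ℝ),
          (Real.exp (-z) / z) * (1 - ∫ ω, Real.exp (-z * X ω) ∂μ)
            * (∫ ω, Real.exp (-z * Y ω) ∂μ) := by
  have hY1 : ∀ ω, (0:ℝ) < Y ω + 1 := fun ω => by linarith [hYpos ω]
  have hlognn : ∀ ω, 0 ≤ Real.log (1 + X ω / (Y ω + 1)) := fun ω =>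
    Real.log_nonneg (by have := div_nonneg (hXpos ω) (hY1 ω).le; linarith)
  -- helper integrability facts for fixed z ≥ 0
  have hexpint : ∀ (z : ℝ) (W : Ω → ℝ), 0 ≤ z → Measurable W → (∀ ω, 0 ≤ W ω) →
      Integrable (fun ω => Real.exp (-z * W ω)) μ := by
    intro z W hz hW hWpos
    refine (integrable_const (1:ℝ)).mono'
      (Real.measurable_exp.comp (hW.const_mul (-z))).aestronglyMeasurable ?_
    refine Filter.Eventually.of_forall fun ω => ?_
    rw [Real.norm_eq_abs, abs_of_pos (Real.exp_pos _)]
    exact Real.exp_le_one_iff.2 (by nlinarith [hWpos ω])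
  have hexple : ∀ (z : ℝ) (W : Ω → ℝ), 0 ≤ z → Measurable W → (∀ ω, 0 ≤ W ω) →
      (∫ ω, Real.exp (-z * W ω) ∂μ) ≤ 1 := by
    intro z W hz hW hWpos
    calc (∫ ω, Real.exp (-z * W ω) ∂μ) ≤ ∫ _, (1:ℝ) ∂μ := by
          refine integral_mono (hexpint z W hz hW hWpos) (integrable_const 1) fun ω => ?_
          exact Real.exp_le_one_iff.2 (by nlinarith [hWpos ω])
      _ = 1 := by simp
  have hexpnn : ∀ (z : ℝ) (W : Ω → ℝ), (0:ℝ) ≤ ∫ ω, Real.exp (-z * W ω) ∂μ :=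
    fun z W => integral_nonneg fun ω => (Real.exp_pos _).le
  -- left side to lintegral
  rw [integral_eq_lintegral_of_nonneg_ae (Filter.Eventually.of_forall hlognn) hint.1]
  -- pointwise Frullani
  have key : ∀ ω, ENNReal.ofReal (Real.log (1 + X ω / (Y ω + 1)))
      = ∫⁻ z in Ioi (0:ℝ),
          ENNReal.ofReal ((Real.exp (-((Y ω + 1)*z)) - Real.exp (-((X ω + Y ω + 1)*z)))/z) := by
    intro ω
    have h0 : (Y ω + 1) ≠ 0 := (hY1 ω).ne'
    rw [frullani_lintegral (hY1 ω) (by linarith [hXpos ω]),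
      show (X ω + Y ω + 1)/(Y ω + 1) = 1 + X ω/(Y ω + 1) by field_simp; ring]
  rw [lintegral_congr key, lintegral_lintegral_swap (by
    apply Measurable.aemeasurable; apply Measurable.ennreal_ofReal; fun_prop)]
  -- per-z computation
  have hz : ∀ z ∈ Ioi (0:ℝ),
      (∫⁻ ω, ENNReal.ofReal ((Real.exp (-((Y ω + 1)*z)) - Real.exp (-((X ω + Y ω + 1)*z)))/z) ∂μ)
        = ENNReal.ofReal ((Real.exp (-z) / z) * (1 - ∫ ω, Real.exp (-z * X ω) ∂μ)
            * (∫ ω, Real.exp (-z * Y ω) ∂μ)) := by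
    intro z hz0
    have hz0' : 0 < z := hz0
    have hpt : ∀ ω, (Real.exp (-((Y ω + 1)*z)) - Real.exp (-((X ω + Y ω + 1)*z)))/z
        = (Real.exp (-z) / z) * ((1 - Real.exp (-z * X ω)) * Real.exp (-z * Y ω)) := by
      intro ω
      rw [show -((Y ω + 1)*z) = -z * Y ω + -z by ring,
          show -((X ω + Y ω + 1)*z) = -z * X ω + (-z * Y ω + -z) by ring,
          Real.exp_add, Real.exp_add, Real.exp_add]
      field_simp
    simp_rw [hpt]
    have hgint : Integrable (fun ω => (1 - Real.exp (-z * X ω)) * Real.exp (-z * Y ω)) μ :=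
      (hexpint z Y hz0'.le hY hYpos).bdd_mul (c := 1)
        ((integrable_const (1:ℝ)).sub (hexpint z X hz0'.le hX hXpos)).1 (Filter.Eventually.of_forall fun ω => by
          rw [Real.norm_eq_abs, abs_le]
          have h1 : Real.exp (-z * X ω) ≤ 1 := Real.exp_le_one_iff.2 (by nlinarith [hXpos ω])
          have h2 := (Real.exp_pos (-z * X ω)).le
          constructor <;> linarith)
    rw [← ofReal_integral_eq_lintegral_ofReal (hgint.const_mul _) ?_]
    · congr 1
      rw [integral_const_mul, mul_assoc]
      congr 1
      have hi : IndepFun (fun ω => 1 - Real.exp (-z * X ω)) (fun ω => Real.exp (-z * Y ω)) μ :=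
        hindep.comp (measurable_const.sub (Real.measurable_exp.comp (measurable_id.const_mul (-z))))
          (Real.measurable_exp.comp (measurable_id.const_mul (-z)))
      have hmul := hi.integral_mul_eq_mul_integral
        ((integrable_const (1:ℝ)).sub (hexpint z X hz0'.le hX hXpos)).1
        (hexpint z Y hz0'.le hY hYpos).1
      refine (hmul.trans ?_ :)
      congr 1
      rw [integral_sub (integrable_const 1) (hexpint z X hz0'.le hX hXpos)]
      simp
    · refine Filter.Eventually.of_forall fun ω => ?_
      have h1 : Real.exp (-z * X ω) ≤ 1 := Real.exp_le_one_iff.2 (by nlinarith [hXpos ω])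
      have h2 : (0:ℝ) ≤ Real.exp (-z) / z := (div_pos (Real.exp_pos _) hz0').le
      exact mul_nonneg h2 (mul_nonneg (by linarith) (Real.exp_pos _).le)
  rw [setLIntegral_congr_fun measurableSet_Ioi hz]
  -- right side
  refine (integral_eq_lintegral_of_nonneg_ae ?_ ?_).symm
  · filter_upwards [ae_restrict_mem measurableSet_Ioi] with z hz0
    have h1 := hexple z X (le_of_lt hz0) hX hXpos
    have h2 := hexpnn z Y
    have h3 : (0:ℝ) ≤ Real.exp (-z) / z := (div_pos (Real.exp_pos _) hz0).le
    exact mul_nonneg (mul_nonneg h3 (by linarith)) h2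
  · have hmX : StronglyMeasurable (fun z : ℝ => ∫ ω, Real.exp (-z * X ω) ∂μ) := by
      apply MeasureTheory.StronglyMeasurable.integral_prod_right
        (f := fun (z : ℝ) (ω : Ω) => Real.exp (-z * X ω))
      exact ((measurable_fst.neg.mul (hX.comp measurable_snd)).exp).stronglyMeasurable
    have hmY : StronglyMeasurable (fun z : ℝ => ∫ ω, Real.exp (-z * Y ω) ∂μ) := by
      apply MeasureTheory.StronglyMeasurable.integral_prod_right
        (f := fun (z : ℝ) (ω : Ω) => Real.exp (-z * Y ω))
      exact ((measurable_fst.neg.mul (hY.comp measurable_snd)).exp).stronglyMeasurable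
    refine AEStronglyMeasurable.mul (AEStronglyMeasurable.mul ?_ ?_) ?_
    · exact ((measurable_neg.exp.div measurable_id)).aestronglyMeasurable
    · exact (hmX.measurable.const_sub 1).aestronglyMeasurable
    · exact hmY.aestronglyMeasurable
end

section
/- Let N ≥ 2 be an integer and B ≥ 0 a real number, and set δ = 2^{−B/(N−1)}. Let G be a random variable with the Gamma(N,1) distribution and Y an independent random variable with the quantization-error distribution Q(N,B). Then for every s ≥ 0, E[exp(−s·G·(1−Y))] = (1/(s+1)) · (1/(1 + s(1−δ)))^{N−1}. -/
open MeasureTheory ProbabilityTheory Real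

/-- The quantization-error distribution `Q(N, B)`: the probability measure on
`[0, δ]` with density `2^B (N-1) x^(N-2)`, where `δ = 2^(-B/(N-1))`. -/
noncomputable def quantErrorMeasure (N : ℕ) (B : ℝ) : Measure ℝ :=
  volume.withDensity (fun x =>
    if 0 ≤ x ∧ x ≤ (2 : ℝ) ^ (-(B / (N - 1))) then
      ENNReal.ofReal ((2 : ℝ) ^ B * (N - 1) * x ^ (N - 2))
    else 0)

open Set in
open scoped ENNReal NNReal in
private lemma gamma_laplace' (N : ℕ) (hN : 1 ≤ N) (t : ℝ) (ht : 0 ≤ t) :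
    ∫ x, Real.exp (-(t * x)) ∂(gammaMeasure N 1) = (1 / (1 + t)) ^ N := by
  have hΓ : 0 < Real.Gamma N := Real.Gamma_pos_of_pos (by positivity)
  have hpdf_nonneg : ∀ x, 0 ≤ gammaPDFReal N 1 x :=
    gammaPDFReal_nonneg (by positivity) one_pos
  rw [gammaMeasure]
  have hd : (gammaPDF N 1) = fun x => ((fun x => (gammaPDFReal N 1 x).toNNReal) x : ℝ≥0∞) := by
    funext x; simp [gammaPDF, ENNReal.ofReal]
  rw [hd, integral_withDensity_eq_integral_smul
    ((measurable_gammaPDFReal N 1).real_toNNReal) _]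
  have h1 : ∀ x : ℝ, (gammaPDFReal N 1 x).toNNReal • Real.exp (-(t * x))
      = Set.indicator (Ici (0:ℝ))
          (fun x => 1 / Real.Gamma N * (x ^ ((N:ℝ) - 1) * Real.exp (-((1 + t) * x)))) x := by
    intro x
    rw [NNReal.smul_def, Real.coe_toNNReal _ (hpdf_nonneg x)]
    unfold gammaPDFReal
    by_cases hx : 0 ≤ x
    · rw [if_pos hx, Set.indicator_of_mem (Set.mem_Ici.mpr hx), smul_eq_mul, Real.one_rpow,
        mul_assoc, ← Real.exp_add, show -(1*x) + -(t*x) = -((1+t)*x) by ring]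
      ring
    · rw [if_neg hx, Set.indicator_of_notMem (by simpa using hx), zero_smul]
  simp_rw [h1]
  rw [integral_indicator measurableSet_Ici, integral_Ici_eq_integral_Ioi,
    integral_const_mul, integral_rpow_mul_exp_neg_mul_Ioi (by positivity : (0:ℝ) < (N:ℝ))
      (by positivity : (0:ℝ) < 1 + t)]
  rw [← Real.rpow_natCast (1 / (1 + t)) N]
  field_simp

open Set in
private lemma gamma_ae_nonneg' (N : ℕ) : ∀ᵐ x ∂(gammaMeasure N 1), 0 ≤ x := by
  rw [ae_iff]
  have h : {x : ℝ | ¬ 0 ≤ x} = Iio 0 := by ext x; simp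
  rw [h, gammaMeasure, withDensity_apply _ measurableSet_Iio]
  exact lintegral_gammaPDF_of_nonpos le_rfl

open Set in
private lemma quant_ae' (N : ℕ) (B : ℝ) :
    ∀ᵐ y ∂(quantErrorMeasure N B), 0 ≤ y ∧ y ≤ (2:ℝ) ^ (-(B / ((N:ℝ) - 1))) := by
  rw [ae_iff]
  have h : {y : ℝ | ¬(0 ≤ y ∧ y ≤ (2:ℝ)^(-(B/((N:ℝ)-1))))}
      = (Icc (0:ℝ) ((2:ℝ)^(-(B/((N:ℝ)-1)))))ᶜ := by
    ext y; simp [Set.mem_Icc]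
  rw [h, quantErrorMeasure, withDensity_apply _ measurableSet_Icc.compl]
  rw [setLIntegral_congr_fun measurableSet_Icc.compl
    (fun y hy => if_neg (by simpa [Set.mem_Icc] using hy))]
  simp

open Set in
open scoped ENNReal NNReal in
private lemma quant_integral' (N : ℕ) (hN : 2 ≤ N) (B : ℝ) (g : ℝ → ℝ) :
    ∫ y, g y ∂(quantErrorMeasure N B)
      = ∫ y in Set.Icc (0:ℝ) ((2:ℝ)^(-(B/((N:ℝ)-1)))),
          (2:ℝ)^B * ((N:ℝ)-1) * y^(N-2) * g y := by
  set δ : ℝ := (2:ℝ)^(-(B/((N:ℝ)-1))) with hδ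
  have hN1 : (1:ℝ) ≤ (N:ℝ) - 1 := by
    have : (2:ℝ) ≤ N := by exact_mod_cast hN
    linarith
  set d : ℝ → ℝ := fun y => if 0 ≤ y ∧ y ≤ δ then (2:ℝ)^B * ((N:ℝ)-1) * y^(N-2) else 0
    with hd
  have hdm : Measurable d := by
    apply Measurable.ite (measurableSet_Icc (a := (0:ℝ)) (b := δ))
    · exact (measurable_const.mul (measurable_id'.pow_const _))
    · exact measurable_const
  have hdens : (fun x : ℝ =>
      if 0 ≤ x ∧ x ≤ (2 : ℝ) ^ (-(B / ((N:ℝ) - 1))) then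
        ENNReal.ofReal ((2 : ℝ) ^ B * ((N:ℝ) - 1) * x ^ (N - 2))
      else 0) = fun y : ℝ => ((fun y => (d y).toNNReal) y : ℝ≥0∞) := by
    funext y
    by_cases hy : 0 ≤ y ∧ y ≤ δ
    · simp [hd, hy, ENNReal.ofReal]
      intro h; exact absurd h (not_lt.mpr hy.2)
    · simp [hd, hy, ENNReal.ofReal]
      intro h1 h2; exact absurd ⟨h1, h2⟩ hy
  rw [quantErrorMeasure, hdens,
    integral_withDensity_eq_integral_smul (hdm.real_toNNReal) g]
  have h1 : ∀ y, (d y).toNNReal • g y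
      = Set.indicator (Icc (0:ℝ) δ) (fun y => (2:ℝ)^B * ((N:ℝ)-1) * y^(N-2) * g y) y := by
    intro y
    by_cases hy : 0 ≤ y ∧ y ≤ δ
    · rw [NNReal.smul_def, Real.coe_toNNReal _ (by
        simp only [hd, if_pos hy]
        have := hy.1
        positivity),
        Set.indicator_of_mem (Set.mem_Icc.mpr hy)]
      simp [hd, if_pos hy]
    · rw [Set.indicator_of_notMem (by simpa [Set.mem_Icc] using hy)]
      simp [hd, if_neg hy]
  simp_rw [h1]
  rw [integral_indicator measurableSet_Icc]

open Set in
private lemma key_ftc' (N : ℕ) (hN : 2 ≤ N) (s δ : ℝ) (hs : 0 ≤ s) (hδ0 : 0 ≤ δ)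
    (hδ1 : δ ≤ 1) :
    ∫ y in Set.Icc (0:ℝ) δ, ((N:ℝ)-1) * y^(N-2) * (1/(1+s*(1-y)))^N
      = (1/(1+s)) * (δ/(1+s*(1-δ)))^(N-1) := by
  have hs1 : (0:ℝ) < 1 + s := by linarith
  have hvpos : ∀ y ∈ Set.Icc (0:ℝ) δ, (0:ℝ) < 1 + s*(1-y) := by
    intro y hy
    have h1 : y ≤ 1 := le_trans hy.2 hδ1
    nlinarith
  have hcont : ContinuousOn (fun y : ℝ => ((N:ℝ)-1) * y^(N-2) * (1/(1+s*(1-y)))^N)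
      (Set.Icc 0 δ) := by
    apply ContinuousOn.mul (Continuous.continuousOn (by continuity))
    exact (continuousOn_const.div (Continuous.continuousOn (by continuity))
      fun y hy => (hvpos y hy).ne').pow N
  obtain ⟨m, rfl⟩ : ∃ m, N = m + 2 := ⟨N - 2, by omega⟩
  rw [MeasureTheory.integral_Icc_eq_integral_Ioc, ← intervalIntegral.integral_of_le hδ0]
  rw [intervalIntegral.integral_eq_sub_of_hasDerivAt
    (f := fun y => (1/(1+s)) * (y/(1+s*(1-y)))^(m+1)) ?_ ?_]
  · rw [show (0:ℝ)/(1+s*(1-0)) = 0 by simp, zero_pow (Nat.succ_ne_zero m)]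
    simp only [mul_zero, sub_zero]
    norm_num
  · intro y hy
    rw [Set.uIcc_of_le hδ0] at hy
    have hv : (0:ℝ) < 1 + s*(1-y) := hvpos y hy
    have hv' : (1:ℝ) + s*(1-y) ≠ 0 := hv.ne'
    have hd1 : HasDerivAt (fun y : ℝ => 1 + s*(1-y)) (s * (-1)) y :=
      (((hasDerivAt_id y).const_sub 1).const_mul s).const_add 1
    have hw : HasDerivAt (fun y : ℝ => y / (1 + s*(1-y)))
        ((1 * (1 + s*(1-y)) - y * (s * (-1))) / (1 + s*(1-y))^2) y :=
      (hasDerivAt_id y).div hd1 hv'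
    have hF := ((hw.pow (m+1)).const_mul (1/(1+s)))
    convert hF using 1
    · rfl
    · rfl
    simp only [Nat.add_sub_cancel]
    rw [div_pow, div_pow]
    field_simp
    push_cast
    ring
  · exact ContinuousOn.intervalIntegrable (by rw [Set.uIcc_of_le hδ0]; exact hcont)

/-- If `G ~ Gamma(N,1)` and `Y ~ Q(N,B)` are independent, then
for every `s ≥ 0`,
`E[exp (-s G (1 - Y))] = (1/(s+1)) * (1/(1 + s(1-δ)))^(N-1)` with `δ = 2^(-B/(N-1))`. -/
theorem laplace_transform_mrt_signal
    {Ω : Type*} [MeasurableSpace Ω] {μ : Measure Ω} [IsProbabilityMeasure μ]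
    (N : ℕ) (hN : 2 ≤ N) (B : ℝ) (hB : 0 ≤ B)
    (G Y : Ω → ℝ) (hG : Measurable G) (hY : Measurable Y)
    (hGdist : μ.map G = gammaMeasure N 1)
    (hYdist : μ.map Y = quantErrorMeasure N B)
    (hindep : IndepFun G Y μ) (s : ℝ) (hs : 0 ≤ s) :
    ∫ ω, Real.exp (-s * (G ω * (1 - Y ω))) ∂μ
      = (1 / (s + 1)) *
          (1 / (1 + s * (1 - (2 : ℝ) ^ (-(B / (N - 1)))))) ^ (N - 1) := by
  set δ : ℝ := (2:ℝ)^(-(B/((N:ℝ)-1))) with hδdef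
  have hN1 : (1:ℝ) < (N:ℝ) := by
    have : (2:ℝ) ≤ (N:ℝ) := by exact_mod_cast hN
    linarith
  have hδpos : (0:ℝ) < δ := Real.rpow_pos_of_pos two_pos _
  have hδle : δ ≤ 1 := Real.rpow_le_one_of_one_le_of_nonpos one_le_two
    (neg_nonpos.mpr (div_nonneg hB (by linarith)))
  haveI hP1 : IsProbabilityMeasure (gammaMeasure (N:ℝ) 1) :=
    hGdist ▸ Measure.isProbabilityMeasure_map hG.aemeasurable
  haveI hP2 : IsProbabilityMeasure (quantErrorMeasure N B) :=
    hYdist ▸ Measure.isProbabilityMeasure_map hY.aemeasurable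
  set f : ℝ × ℝ → ℝ := fun p => Real.exp (-s * (p.1 * (1 - p.2))) with hf
  have hfc : Continuous f := by fun_prop
  have hmap : μ.map (fun ω => (G ω, Y ω))
      = (gammaMeasure (N:ℝ) 1).prod (quantErrorMeasure N B) := by
    rw [← hGdist, ← hYdist]
    exact (indepFun_iff_map_prod_eq_prod_map_map hG.aemeasurable hY.aemeasurable).mp hindep
  have hae : ∀ᵐ z ∂((gammaMeasure (N:ℝ) 1).prod (quantErrorMeasure N B)),
      0 ≤ z.1 ∧ z.2 ≤ 1 := by
    rw [ae_iff]
    refine measure_mono_null (t := ({x : ℝ | ¬ 0 ≤ x} ×ˢ Set.univ) ∪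
        (Set.univ ×ˢ {y : ℝ | ¬ y ≤ 1})) (fun z hz => ?_) ?_
    · simp only [Set.mem_setOf_eq, not_and_or] at hz
      rcases hz with hz | hz
      · exact Or.inl (by simp [not_le.mp hz])
      · exact Or.inr (by simp [not_le.mp hz])
    · apply measure_union_null
      · rw [MeasureTheory.Measure.prod_prod, measure_univ, mul_one]
        exact ae_iff.mp (gamma_ae_nonneg' N)
      · rw [MeasureTheory.Measure.prod_prod, measure_univ, one_mul]
        refine measure_mono_null (fun y hy => ?_) (ae_iff.mp (quant_ae' N B))
        simp only [Set.mem_setOf_eq] at hy ⊢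
        intro hc
        exact hy (le_trans hc.2 hδle)
  have hint : Integrable f ((gammaMeasure (N:ℝ) 1).prod (quantErrorMeasure N B)) := by
    apply Integrable.mono' (integrable_const 1) hfc.aestronglyMeasurable
    filter_upwards [hae] with z hz
    rw [Real.norm_eq_abs, abs_of_pos (Real.exp_pos _), Real.exp_le_one_iff]
    have h1 : 0 ≤ 1 - z.2 := by linarith [hz.2]
    nlinarith [mul_nonneg hz.1 h1]
  have step1 : ∫ ω, Real.exp (-s * (G ω * (1 - Y ω))) ∂μ
      = ∫ z, f z ∂((gammaMeasure (N:ℝ) 1).prod (quantErrorMeasure N B)) := by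
    rw [← hmap, integral_map (hG.prodMk hY).aemeasurable hfc.aestronglyMeasurable]
  rw [step1, MeasureTheory.integral_prod_symm f hint]
  have step3 : ∫ y, (∫ x, f (x, y) ∂(gammaMeasure (N:ℝ) 1)) ∂(quantErrorMeasure N B)
      = ∫ y, (1/(1 + s*(1-y)))^N ∂(quantErrorMeasure N B) := by
    apply integral_congr_ae
    filter_upwards [quant_ae' N B] with y hy
    have ht : 0 ≤ s * (1 - y) := mul_nonneg hs (by linarith [le_trans hy.2 hδle])
    have h2 : (fun x => f (x, y)) = fun x => Real.exp (-((s*(1-y)) * x)) := by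
      funext x
      simp only [hf]
      congr 1
      ring
    rw [show (∫ x, f (x, y) ∂(gammaMeasure (N:ℝ) 1))
        = ∫ x, Real.exp (-((s*(1-y)) * x)) ∂(gammaMeasure (N:ℝ) 1) by rw [h2]]
    rw [gamma_laplace' N (by omega) _ ht]
  rw [step3, quant_integral' N hN B _]
  have step5 : ∀ y : ℝ, (2:ℝ)^B * ((N:ℝ)-1) * y^(N-2) * ((1/(1+s*(1-y)))^N)
      = (2:ℝ)^B * (((N:ℝ)-1) * y^(N-2) * (1/(1+s*(1-y)))^N) := fun y => by ring
  simp_rw [step5]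
  rw [MeasureTheory.integral_const_mul, key_ftc' N hN s δ hs hδpos.le hδle]
  -- final algebra
  have hkey : (2:ℝ)^B * δ^(N-1) = 1 := by
    rw [hδdef, ← Real.rpow_natCast ((2:ℝ)^(-(B/((N:ℝ)-1)))) (N-1),
      ← Real.rpow_mul (by norm_num : (0:ℝ) ≤ 2),
      ← Real.rpow_add (by norm_num : (0:ℝ) < 2)]
    rw [show ((N-1 : ℕ) : ℝ) = (N:ℝ) - 1 by push_cast [Nat.cast_sub (by omega : 1 ≤ N)]; ring]
    rw [show B + -(B/((N:ℝ)-1)) * ((N:ℝ)-1) = 0 by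
      rw [neg_mul, div_mul_cancel₀ B (by linarith : (N:ℝ)-1 ≠ 0)]; ring]
    exact Real.rpow_zero 2
  have hc : (0:ℝ) < 1 + s*(1-δ) := by nlinarith
  rw [div_pow, div_pow, one_pow]
  rw [show (2:ℝ)^B * (1/(1+s) * (δ^(N-1)/(1+s*(1-δ))^(N-1)))
      = ((2:ℝ)^B * δ^(N-1)) * (1/(s+1) * (1/(1+s*(1-δ))^(N-1))) by ring, hkey, one_mul]
end

section
/- Let N ≥ 3 be an integer and B ≥ 0 a real number, and set δ = 2^{−B/(N−1)}. Let G, Y, T be mutually independent random variables where G has the Gamma(N,1) distribution, Y has the quantization-error distribution Q(N,B), and T has the Beta(1, N−2) distribution. Then the product G·Y·T has the exponential distribution with mean δ; equivalently, E[exp(−s·G·Y·T)] = 1/(1 + sδ) for every s ≥ 0. -/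
open MeasureTheory ProbabilityTheory Real Set

/-- The distribution `Beta(1, N-2)`: the probability measure on `[0,1]`
with density `(N-2)(1-t)^(N-3)`. -/
noncomputable def betaOneMeasure (N : ℕ) : Measure ℝ :=
  volume.withDensity (fun t =>
    if 0 ≤ t ∧ t ≤ 1 then ENNReal.ofReal ((N - 2) * (1 - t) ^ (N - 3)) else 0)

lemma aux_beta_integral (n : ℕ) (a b : ℝ) :
    ∫ t in a..b, (n : ℝ) * (1 - t) ^ (n - 1) = (1 - a) ^ n - (1 - b) ^ n := by
  have h : ∀ t : ℝ, HasDerivAt (fun t : ℝ => -(1 - t) ^ n)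
      ((n : ℝ) * (1 - t) ^ (n - 1)) t := by
    intro t
    have h1 : HasDerivAt (fun t : ℝ => (1 : ℝ) - t) (-1) t := (hasDerivAt_id t).const_sub 1
    have h2 := (h1.pow n).neg
    refine (show HasDerivAt (fun t : ℝ => -(1 - t) ^ n) _ t from h2).congr_deriv ?_
    ring
  rw [intervalIntegral.integral_eq_sub_of_hasDerivAt (fun t _ => h t)]
  · ring
  · apply Continuous.intervalIntegrable
    continuity

lemma quant_Iic (N : ℕ) (hN : 3 ≤ N) (B : ℝ) (c : ℝ) :
    quantErrorMeasure N B (Iic c)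
      = ENNReal.ofReal ((2:ℝ)^B * (max 0 (min c ((2:ℝ)^(-(B/((N:ℝ)-1)))))) ^ (N-1)) := by
  set d : ℝ := (2:ℝ)^(-(B/((N:ℝ)-1))) with hd
  set m : ℝ := max 0 (min c d) with hm
  have hm0 : 0 ≤ m := le_max_left _ _
  have hNR : (1:ℝ) ≤ (N:ℝ) - 1 := by
    have : (3:ℝ) ≤ (N:ℝ) := by exact_mod_cast hN
    linarith
  rw [quantErrorMeasure, withDensity_apply _ measurableSet_Iic, ← lintegral_indicator
    measurableSet_Iic]
  have hcongr : ∀ x : ℝ, (Iic c).indicator (fun x =>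
      if 0 ≤ x ∧ x ≤ d then ENNReal.ofReal ((2 : ℝ) ^ B * ((N:ℝ) - 1) * x ^ (N - 2)) else 0) x
      = (Icc 0 m).indicator
        (fun x => ENNReal.ofReal ((2 : ℝ) ^ B * ((N:ℝ) - 1) * x ^ (N - 2))) x := by
    intro x
    simp only [Set.indicator_apply, mem_Iic, mem_Icc]
    by_cases hxm : 0 ≤ x ∧ x ≤ m
    · rw [if_pos hxm]
      by_cases hmin : 0 ≤ min c d
      · have hmeq : m = min c d := max_eq_right hmin
        have hxc : x ≤ c := le_trans hxm.2 (hmeq ▸ min_le_left _ _)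
        have hxd : x ≤ d := le_trans hxm.2 (hmeq ▸ min_le_right _ _)
        rw [if_pos hxc, if_pos ⟨hxm.1, hxd⟩]
      · have hmeq : m = 0 := max_eq_left (le_of_lt (not_le.1 hmin))
        have hx0 : x = 0 := le_antisymm (hmeq ▸ hxm.2) hxm.1
        subst hx0
        have hz : (0:ℝ) ^ (N - 2) = 0 := zero_pow (by omega)
        split_ifs <;> simp [hz]
    · rw [if_neg hxm]
      split_ifs with h1 h2
      · exfalso
        exact hxm ⟨h2.1, le_max_of_le_right (le_min h1 h2.2)⟩
      · rfl
      · rfl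
  rw [lintegral_congr hcongr, lintegral_indicator measurableSet_Icc,
    ← ofReal_integral_eq_lintegral_ofReal]
  · rw [integral_Icc_eq_integral_Ioc, ← intervalIntegral.integral_of_le hm0]
    rw [intervalIntegral.integral_const_mul, integral_pow]
    have h1 : N - 2 + 1 = N - 1 := by omega
    have h2 : ((N:ℝ) - 2) + 1 = (N:ℝ) - 1 := by ring
    have h3 : (0:ℝ) ^ (N - 2 + 1) = 0 := zero_pow (by omega)
    rw [h1] at h3 ⊢
    rw [h3, sub_zero]
    have hc : ((N - 2 : ℕ) : ℝ) + 1 = (N:ℝ) - 1 := by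
      rw [Nat.cast_sub (by omega)]
      push_cast
      ring
    rw [hc]
    have hne : (N:ℝ) - 1 ≠ 0 := by linarith
    field_simp
  · apply Continuous.integrableOn_Icc
    continuity
  · refine (ae_restrict_iff' measurableSet_Icc).2 (ae_of_all _ fun x hx => ?_)
    have hx0 : 0 ≤ x := hx.1
    have h2B : (0:ℝ) < (2:ℝ)^B := rpow_pos_of_pos two_pos _
    positivity

lemma beta_Ioi (N : ℕ) (hN : 3 ≤ N) (c : ℝ) :
    betaOneMeasure N (Ioi c) = ENNReal.ofReal ((1 - max 0 (min c 1)) ^ (N-2)) := by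
  set m : ℝ := max 0 (min c 1) with hm
  have hm0 : 0 ≤ m := le_max_left _ _
  have hm1 : m ≤ 1 := max_le zero_le_one (min_le_right _ _)
  rw [betaOneMeasure, withDensity_apply _ measurableSet_Ioi, ← lintegral_indicator
    measurableSet_Ioi]
  have h0 : ∀ᵐ (t : ℝ) ∂volume, t ≠ 0 := by
    refine ae_iff.2 ?_
    simpa using Real.volume_singleton
  rw [lintegral_congr_ae (g := (Ioc m 1).indicator
      (fun t => ENNReal.ofReal (((N:ℝ) - 2) * (1 - t) ^ (N - 3))))]
  swap
  · filter_upwards [h0] with t ht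
    simp only [Set.indicator_apply, mem_Ioi, mem_Ioc]
    by_cases htc : m < t ∧ t ≤ 1
    · rw [if_pos htc]
      have ht0 : 0 < t := lt_of_le_of_lt hm0 htc.1
      have htc' : c < t := by
        rcases le_or_gt c 1 with h | h
        · calc c = min c 1 := (min_eq_left h).symm
            _ ≤ m := le_max_right _ _
            _ < t := htc.1
        · exfalso
          have h1 : (1:ℝ) ≤ m := le_max_of_le_right (by rw [min_eq_right h.le])
          linarith [htc.1, htc.2]
      rw [if_pos htc', if_pos ⟨ht0.le, htc.2⟩]
    · rw [if_neg htc]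
      split_ifs with h1 h2
      · exfalso
        apply htc
        have ht0 : 0 < t := lt_of_le_of_ne h2.1 (Ne.symm ht)
        refine ⟨?_, h2.2⟩
        rw [hm]
        exact max_lt ht0 (lt_of_le_of_lt (min_le_left _ _) h1)
      · rfl
      · rfl
  · rw [lintegral_indicator measurableSet_Ioc, ← ofReal_integral_eq_lintegral_ofReal]
    · rw [← intervalIntegral.integral_of_le hm1]
      have hcast : ∀ t : ℝ, ((N:ℝ) - 2) * (1 - t) ^ (N - 3)
          = ((N - 2 : ℕ) : ℝ) * (1 - t) ^ ((N - 2) - 1) := by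
        intro t
        have he : N - 3 = (N - 2) - 1 := by omega
        rw [he, Nat.cast_sub (by omega)]
        push_cast
        ring
      simp_rw [hcast]
      rw [aux_beta_integral (N - 2) m 1]
      norm_num [zero_pow (by omega : N - 2 ≠ 0)]
    · apply Continuous.integrableOn_Ioc
      continuity
    · refine (ae_restrict_iff' measurableSet_Ioc).2 (ae_of_all _ fun t ht => ?_)
      have h1 : t ≤ 1 := ht.2
      have h2 : (0:ℝ) ≤ (N:ℝ) - 2 := by
        have : (3:ℝ) ≤ (N:ℝ) := by exact_mod_cast hN
        linarith
      have h3 : 0 ≤ 1 - t := by linarith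
      positivity

lemma gammaPDF_nat (n : ℕ) (hn : 1 ≤ n) (r x : ℝ) :
    gammaPDF (n : ℝ) r x
      = ENNReal.ofReal (if 0 ≤ x then r ^ n / ((n-1).factorial : ℝ) * x ^ (n - 1) * Real.exp (-(r * x))
          else 0) := by
  rw [gammaPDF_eq]
  congr 1
  have h1 : ((n:ℝ) - 1) = ((n - 1 : ℕ) : ℝ) := by
    rw [Nat.cast_sub hn]; norm_num
  have h2 : Real.Gamma (n:ℝ) = ((n-1).factorial : ℝ) := by
    rw [show ((n:ℝ)) = ((n - 1 : ℕ) : ℝ) + 1 by rw [Nat.cast_sub hn]; ring]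
    exact Real.Gamma_nat_eq_factorial (n-1)
  rw [h1, h2, rpow_natCast, rpow_natCast]

lemma gammaPDF_zero (n : ℕ) (hn : 2 ≤ n) (r : ℝ) : gammaPDF (n : ℝ) r 0 = 0 := by
  rw [gammaPDF_nat n (by omega) r 0, if_pos le_rfl, zero_pow (by omega : n - 1 ≠ 0)]
  simp

lemma gamma_nonpos_zero (n : ℕ) (hn : 2 ≤ n) (r x : ℝ) (hx : x ≤ 0) :
    gammaMeasure (n:ℝ) r (Iic x) = 0 := by
  rw [gammaMeasure, withDensity_apply _ measurableSet_Iic]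
  rw [setLIntegral_congr_fun_ae measurableSet_Iic (ae_of_all _ (fun y (hy : y ≤ x) => ?_)),
    lintegral_zero]
  rcases lt_or_eq_of_le (le_trans hy hx) with h | h
  · exact gammaPDF_of_neg h
  · rw [h]; exact gammaPDF_zero n hn r

lemma gamma_Ioc_int (n : ℕ) (hn : 1 ≤ n) (r : ℝ) (hr : 0 ≤ r) (a : ℝ) (ha : 0 ≤ a) :
    ∫⁻ g in Ioc 0 a, gammaPDF (n:ℝ) r g
      = ENNReal.ofReal (∫ g in (0:ℝ)..a, r ^ n / ((n-1).factorial : ℝ) * g ^ (n - 1) * Real.exp (-(r * g))) := by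
  rw [setLIntegral_congr_fun_ae measurableSet_Ioc (ae_of_all _ (fun g hg => by
    rw [gammaPDF_nat n hn, if_pos (le_of_lt hg.1)]))]
  rw [← ofReal_integral_eq_lintegral_ofReal]
  · rw [intervalIntegral.integral_of_le ha]
  · apply Continuous.integrableOn_Ioc; continuity
  · refine (ae_restrict_iff' measurableSet_Ioc).2 (ae_of_all _ fun g hg => ?_)
    have h1 : 0 ≤ g := le_of_lt hg.1
    positivity

lemma gamma_Iic_int (n : ℕ) (hn : 1 ≤ n) (r : ℝ) (hr : 0 ≤ r) (x : ℝ) (hx : 0 ≤ x) :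
    ∫⁻ g in Iic x, gammaPDF (n:ℝ) r g
      = ENNReal.ofReal (∫ g in (0:ℝ)..x, r ^ n / ((n-1).factorial : ℝ) * g ^ (n - 1) * Real.exp (-(r * g))) := by
  rw [lintegral_Iic_eq_lintegral_Iio_add_Icc _ hx, lintegral_gammaPDF_of_nonpos le_rfl, zero_add]
  rw [setLIntegral_congr_fun_ae measurableSet_Icc (ae_of_all _ (fun g hg => by
    rw [gammaPDF_nat n hn, if_pos hg.1]))]
  rw [← ofReal_integral_eq_lintegral_ofReal]
  · rw [integral_Icc_eq_integral_Ioc, intervalIntegral.integral_of_le hx]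
  · apply Continuous.integrableOn_Icc; continuity
  · refine (ae_restrict_iff' measurableSet_Icc).2 (ae_of_all _ fun g hg => ?_)
    have h1 : 0 ≤ g := hg.1
    positivity

lemma aux_gamma_step' (k : ℕ) (hk : 1 ≤ k) (a : ℝ) :
    (k : ℝ) * ∫ u in (0:ℝ)..a, u ^ (k - 1) * Real.exp (-u)
      = (∫ g in (0:ℝ)..a, g ^ k * Real.exp (-g)) + a ^ k * Real.exp (-a) := by
  have h : ∀ u : ℝ, HasDerivAt (fun u : ℝ => -(u ^ k * Real.exp (-u)))
      (u ^ k * Real.exp (-u) - (k : ℝ) * (u ^ (k - 1) * Real.exp (-u))) u := by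
    intro u
    have he : HasDerivAt (fun u : ℝ => Real.exp (-u)) (-Real.exp (-u)) u := by
      simpa using ((hasDerivAt_id u).neg.exp)
    have h2 := ((hasDerivAt_pow k u).mul he).neg
    refine (show HasDerivAt (fun u : ℝ => -(u ^ k * Real.exp (-u))) _ u from h2).congr_deriv ?_
    ring
  have := intervalIntegral.integral_eq_sub_of_hasDerivAt (fun u (_ : u ∈ Set.uIcc 0 a) => h u)
    (by apply Continuous.intervalIntegrable; continuity)
  rw [intervalIntegral.integral_sub (by apply Continuous.intervalIntegrable; continuity)
    (by apply Continuous.intervalIntegrable; continuity)] at this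
  rw [intervalIntegral.integral_const_mul] at this
  have h0 : (0:ℝ) ^ k = 0 := zero_pow (by omega)
  simp only [h0, neg_zero, Real.exp_zero, zero_mul, mul_zero, neg_zero, sub_zero] at this
  linarith [this]

lemma key_identity (k : ℕ) (hk : 2 ≤ k) (d : ℝ) (hd : 0 < d) (x : ℝ) :
    ∫ z in (0:ℝ)..x, (1/d) ^ k / ((k-1).factorial : ℝ) * z ^ (k - 1) * Real.exp (-(1/d * z))
      = (∫ g in (0:ℝ)..(x/d), 1 ^ (k+1) / (k.factorial : ℝ) * g ^ k * Real.exp (-(1 * g)))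
        + (x/d) ^ k * Real.exp (-(x/d)) / (k.factorial : ℝ) := by
  obtain ⟨j, rfl⟩ : ∃ j, k = j + 1 := ⟨k - 1, by omega⟩
  simp only [Nat.add_sub_cancel]
  have hd' : d ≠ 0 := hd.ne'
  have hfne : ((j.factorial : ℝ)) ≠ 0 := by positivity
  have hcomp : ∀ z : ℝ, (1/d) ^ (j+1) / (j.factorial : ℝ) * z ^ j * Real.exp (-(1/d * z))
      = (fun u => (1/d) / (j.factorial : ℝ) * (u ^ j * Real.exp (-u))) (z / d) := by
    intro z
    simp only
    rw [show -(1/d * z) = -(z/d) by ring]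
    ring
  have h := intervalIntegral.integral_comp_div (a := (0:ℝ)) (b := x) (c := d)
    (f := fun u => (1/d) / (j.factorial : ℝ) * (u ^ j * Real.exp (-u))) hd'
  rw [intervalIntegral.integral_congr (fun z _ => hcomp z), h]
  beta_reduce
  rw [zero_div, intervalIntegral.integral_const_mul, smul_eq_mul]
  have hstep := aux_gamma_step' (j+1) (by omega) (x/d)
  simp only [Nat.add_sub_cancel] at hstep
  set E := ∫ u in (0:ℝ)..(x/d), u ^ j * Real.exp (-u) with hE
  set F := ∫ g in (0:ℝ)..(x/d), g ^ (j+1) * Real.exp (-g) with hF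
  have hF2 : ∫ g in (0:ℝ)..(x/d), 1 ^ (j+1+1) / ((j+1).factorial : ℝ) * g ^ (j+1)
      * Real.exp (-(1*g)) = (1 / ((j+1).factorial : ℝ)) * F := by
    rw [hF, ← intervalIntegral.integral_const_mul]
    apply intervalIntegral.integral_congr
    intro g _
    simp only [one_pow, one_mul]
    ring
  rw [hF2]
  have hfact : (((j+1).factorial : ℕ) : ℝ) = ((j:ℝ) + 1) * (j.factorial : ℝ) := by
    rw [Nat.factorial_succ]
    push_cast
    ring
  rw [hfact]
  have hEeq : E = (F + (x/d) ^ (j+1) * Real.exp (-(x/d))) / ((j:ℝ) + 1) := by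
    rw [eq_div_iff (by positivity)]
    push_cast at hstep
    linarith
  rw [hEeq]
  field_simp

lemma stage1 (N : ℕ) (hN : 3 ≤ N) (B : ℝ) (hB : 0 ≤ B)
    [IsProbabilityMeasure (quantErrorMeasure N B)] :
    ((gammaMeasure (N:ℝ) 1).prod (quantErrorMeasure N B)).map (fun p : ℝ × ℝ => p.1 * p.2)
      = gammaMeasure ((N - 1 : ℕ) : ℝ) (1 / (2:ℝ) ^ (-(B / ((N:ℝ) - 1)))) := by
  set d : ℝ := (2:ℝ) ^ (-(B / ((N:ℝ) - 1))) with hd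
  have hd0 : 0 < d := rpow_pos_of_pos two_pos _
  have hN3 : (3:ℝ) ≤ (N:ℝ) := by exact_mod_cast hN
  have h2B : (2:ℝ)^B * d ^ (N-1 : ℕ) = 1 := by
    rw [hd, ← rpow_natCast ((2:ℝ) ^ (-(B / ((N:ℝ)-1)))) (N-1),
      ← rpow_mul (by norm_num : (0:ℝ) ≤ 2)]
    rw [show (-(B / ((N:ℝ)-1)) * ((N-1:ℕ):ℝ)) = -B by
      rw [Nat.cast_sub (by omega)]
      push_cast
      field_simp
      rw [mul_div_assoc, div_self (by linarith : (N:ℝ) - 1 ≠ 0), mul_one]]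
    rw [← rpow_add two_pos]
    simp
  have hprobG : IsProbabilityMeasure (gammaMeasure (N:ℝ) 1) :=
    isProbabilityMeasure_gammaMeasure (by exact_mod_cast (by omega : 0 < N)) one_pos
  have hprobG2 : IsProbabilityMeasure (gammaMeasure ((N-1:ℕ):ℝ) (1/d)) :=
    isProbabilityMeasure_gammaMeasure (by exact_mod_cast (by omega : 0 < N - 1)) (by positivity)
  have hmeasmul : Measurable fun p : ℝ × ℝ => p.1 * p.2 := measurable_fst.mul measurable_snd
  have hprobmap : IsProbabilityMeasure
      (((gammaMeasure (N:ℝ) 1).prod (quantErrorMeasure N B)).map (fun p : ℝ × ℝ => p.1 * p.2)) :=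
    Measure.isProbabilityMeasure_map hmeasmul.aemeasurable
  have hpdfmeas : Measurable (gammaPDF (N:ℝ) 1) := (measurable_gammaPDFReal _ _).ennreal_ofReal
  refine Measure.ext_of_Iic _ _ (fun x => ?_)
  rw [Measure.map_apply hmeasmul measurableSet_Iic,
    Measure.prod_apply (hmeasmul measurableSet_Iic)]
  have hwd : ∫⁻ g, quantErrorMeasure N B
        (Prod.mk g ⁻¹' ((fun p : ℝ × ℝ => p.1 * p.2) ⁻¹' Iic x)) ∂(gammaMeasure (N:ℝ) 1)
      = ∫⁻ g, gammaPDF (N:ℝ) 1 g * quantErrorMeasure N B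
        (Prod.mk g ⁻¹' ((fun p : ℝ × ℝ => p.1 * p.2) ⁻¹' Iic x)) ∂volume := by
    rw [gammaMeasure, lintegral_withDensity_eq_lintegral_mul_non_measurable _ hpdfmeas
      (ae_of_all _ fun _ => ENNReal.ofReal_lt_top)]
    rfl
  rw [hwd]
  have hset : ∀ g : ℝ, 0 < g →
      (Prod.mk g ⁻¹' ((fun p : ℝ × ℝ => p.1 * p.2) ⁻¹' Iic x)) = Iic (x/g) := by
    intro g hg
    ext y
    simp only [Set.mem_preimage, mem_Iic]
    exact (le_div_iff₀' hg).symm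
  rcases le_or_gt x 0 with hx | hx
  · rw [gamma_nonpos_zero (N-1) (by omega) _ x hx]
    have hz : ∀ g : ℝ, gammaPDF (N:ℝ) 1 g * quantErrorMeasure N B
        (Prod.mk g ⁻¹' ((fun p : ℝ × ℝ => p.1 * p.2) ⁻¹' Iic x)) = 0 := by
      intro g
      rcases lt_trichotomy g 0 with hg | hg | hg
      · rw [gammaPDF_of_neg hg, zero_mul]
      · rw [hg, gammaPDF_zero N (by omega), zero_mul]
      · rw [hset g hg, quant_Iic N hN B]
        have hxg : x / g ≤ 0 := by rw [div_nonpos_iff]; right; exact ⟨hx, hg.le⟩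
        rw [max_eq_left (le_trans (min_le_left _ _) hxg), zero_pow (by omega : N - 1 ≠ 0),
          mul_zero, ENNReal.ofReal_zero, mul_zero]
    rw [lintegral_congr hz, lintegral_zero]
  · -- 0 < x
    have hxd0 : 0 < x / d := div_pos hx hd0
    have hF : ∀ g : ℝ, gammaPDF (N:ℝ) 1 g * quantErrorMeasure N B
        (Prod.mk g ⁻¹' ((fun p : ℝ × ℝ => p.1 * p.2) ⁻¹' Iic x))
        = (Ioc 0 (x/d)).indicator (gammaPDF (N:ℝ) 1) g
          + (Ioi (x/d)).indicator (fun g => ENNReal.ofReal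
              ((2:ℝ)^B * x^(N-1) / ((N-1).factorial : ℝ) * Real.exp (-g))) g := by
      intro g
      rcases lt_trichotomy g 0 with hg | hg | hg
      · rw [gammaPDF_of_neg hg, zero_mul,
          Set.indicator_of_notMem (by simp [mem_Ioc]; intro h; linarith),
          Set.indicator_of_notMem (by simp [mem_Ioi]; linarith), add_zero]
      · rw [hg, gammaPDF_zero N (by omega), zero_mul,
          Set.indicator_of_notMem (by simp [mem_Ioc]),
          Set.indicator_of_notMem (by simp [mem_Ioi]; positivity), add_zero]
      · rw [hset g hg, quant_Iic N hN B]
        have hxg : 0 < x / g := div_pos hx hg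
        have hminpos : 0 < min (x/g) d := lt_min hxg hd0
        rw [max_eq_right hminpos.le]
        rcases le_or_gt g (x/d) with hgle | hglt
        · have hdle : d ≤ x / g := by
            rw [le_div_iff₀ hg]
            calc d * g = g * d := by ring
              _ ≤ (x/d) * d := by
                  apply mul_le_mul_of_nonneg_right hgle hd0.le
              _ = x := by field_simp
          rw [min_eq_right hdle, h2B, ENNReal.ofReal_one, mul_one,
            Set.indicator_of_mem (by exact ⟨hg, hgle⟩),
            Set.indicator_of_notMem (by simp [mem_Ioi]; exact hgle), add_zero]
        · have hdgt : x / g < d := by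
            rw [div_lt_iff₀ hg]
            calc x = (x/d) * d := by field_simp
              _ < g * d := by apply mul_lt_mul_of_pos_right hglt hd0
              _ = d * g := by ring
          rw [min_eq_left hdgt.le,
            Set.indicator_of_notMem (by simp [mem_Ioc]; intro h; linarith),
            Set.indicator_of_mem (by exact hglt), zero_add]
        -- remaining: gammaPDF * ofReal(2^B * (x/g)^(N-1)) = ofReal (...)
          rw [gammaPDF_nat N (by omega), if_pos hg.le, ← ENNReal.ofReal_mul (by positivity)]
          congr 1
          rw [div_pow]
          have hgN : g ^ (N-1) ≠ 0 := pow_ne_zero _ hg.ne'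
          have hfacne : ((N-1).factorial : ℝ) ≠ 0 := by positivity
          field_simp
          ring
    rw [lintegral_congr hF,
      lintegral_add_left (hpdfmeas.indicator measurableSet_Ioc),
      lintegral_indicator measurableSet_Ioc, lintegral_indicator measurableSet_Ioi,
      gamma_Ioc_int N (by omega) 1 one_pos.le (x/d) hxd0.le]
    have hT2 : ∫⁻ g in Ioi (x/d), ENNReal.ofReal
        ((2:ℝ)^B * x^(N-1) / ((N-1).factorial : ℝ) * Real.exp (-g))
        = ENNReal.ofReal ((2:ℝ)^B * x^(N-1) / ((N-1).factorial : ℝ) * Real.exp (-(x/d))) := by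
      rw [← ofReal_integral_eq_lintegral_ofReal]
      · rw [integral_const_mul, integral_exp_neg_Ioi]
      · apply Integrable.const_mul
        have := exp_neg_integrableOn_Ioi (x/d) (zero_lt_one (α := ℝ))
        simp at this; exact this
      · refine ae_of_all _ fun g => by positivity
    rw [hT2]
    have hRHS : gammaMeasure ((N-1:ℕ):ℝ) (1/d) (Iic x)
        = ENNReal.ofReal (∫ z in (0:ℝ)..x, (1/d) ^ (N-1) / (((N-1)-1).factorial : ℝ)
            * z ^ ((N-1) - 1) * Real.exp (-(1/d * z))) := by
      rw [gammaMeasure, withDensity_apply _ measurableSet_Iic,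
        gamma_Iic_int (N-1) (by omega) (1/d) (by positivity) x hx.le]
    rw [hRHS, ← ENNReal.ofReal_add]
    · congr 1
      have hkey := key_identity (N-1) (by omega) d hd0 x
      rw [show N - 1 + 1 = N by omega] at hkey
      have h2B' : (2:ℝ)^B * x^(N-1) = (x/d)^(N-1) := by
        rw [div_pow, eq_div_iff (pow_ne_zero _ hd0.ne')]
        calc (2:ℝ)^B * x^(N-1) * d^(N-1) = x^(N-1) * ((2:ℝ)^B * d^(N-1)) := by ring
          _ = x^(N-1) := by rw [h2B, mul_one]
      rw [hkey]
      rw [h2B']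
      ring
    · apply intervalIntegral.integral_nonneg hxd0.le
      intro g hg
      have := hg.1
      positivity
    · positivity

lemma stage2 (N : ℕ) (hN : 3 ≤ N) (d : ℝ) (hd0 : 0 < d)
    [IsProbabilityMeasure (betaOneMeasure N)] :
    ((gammaMeasure ((N - 1 : ℕ) : ℝ) (1/d)).prod (betaOneMeasure N)).map
        (fun p : ℝ × ℝ => p.1 * p.2)
      = expMeasure (1/d) := by
  have hr0 : (0:ℝ) < 1/d := by positivity
  have hprobG2 : IsProbabilityMeasure (gammaMeasure ((N-1:ℕ):ℝ) (1/d)) :=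
    isProbabilityMeasure_gammaMeasure (by exact_mod_cast (by omega : 0 < N - 1)) hr0
  have hprobE : IsProbabilityMeasure (expMeasure (1/d)) := isProbabilityMeasure_expMeasure hr0
  have hmeasmul : Measurable fun p : ℝ × ℝ => p.1 * p.2 := measurable_fst.mul measurable_snd
  have hprobmap : IsProbabilityMeasure
      (((gammaMeasure ((N-1:ℕ):ℝ) (1/d)).prod (betaOneMeasure N)).map
        (fun p : ℝ × ℝ => p.1 * p.2)) :=
    Measure.isProbabilityMeasure_map hmeasmul.aemeasurable
  set C : ℝ := (1/d)^(N-1) / ((N-2).factorial : ℝ) with hC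
  have hC0 : 0 < C := by positivity
  have hpdf : ∀ u : ℝ, gammaPDF ((N-1:ℕ):ℝ) (1/d) u
      = ENNReal.ofReal (if 0 ≤ u then C * (u^(N-2) * Real.exp (-(1/d*u))) else 0) := by
    intro u
    rw [gammaPDF_nat (N-1) (by omega)]
    congr 1
    rw [show N-1-1 = N-2 by omega]
    split_ifs with h
    · rw [hC]; ring
    · rfl
  have hpdfmeas : Measurable (gammaPDF ((N-1:ℕ):ℝ) (1/d)) :=
    (measurable_gammaPDFReal _ _).ennreal_ofReal
  have hpdfzero : ∀ u : ℝ, u ≤ 0 → gammaPDF ((N-1:ℕ):ℝ) (1/d) u = 0 := by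
    intro u hu
    rw [hpdf u]
    rcases lt_or_eq_of_le hu with h | h
    · rw [if_neg (not_le.2 h)]; simp
    · rw [h, if_pos le_rfl, zero_pow (by omega : N - 2 ≠ 0)]; simp
  have hbIic : ∀ c : ℝ, c ≤ 0 → betaOneMeasure N (Iic c) = 0 := by
    intro c hc
    have h1 : betaOneMeasure N (Iic c) + betaOneMeasure N (Ioi c) = 1 := by
      rw [← measure_union (Iic_disjoint_Ioi le_rfl) measurableSet_Ioi, Iic_union_Ioi,
        measure_univ]
    rw [beta_Ioi N hN c, min_eq_left (le_trans hc zero_le_one), max_eq_left hc, sub_zero,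
      one_pow, ENNReal.ofReal_one] at h1
    have h2 := ENNReal.sub_eq_of_eq_add (by norm_num) h1.symm
    simpa using h2.symm
  have hRHS : ∀ x : ℝ, expMeasure (1/d) (Iic x)
      = ENNReal.ofReal (if 0 ≤ x then 1 - Real.exp (-(1/d*x)) else 0) := by
    intro x
    rw [expMeasure, gammaMeasure, withDensity_apply _ measurableSet_Iic]
    exact lintegral_exponentialPDF_eq_antiDeriv hr0 x
  refine Measure.ext_of_Iic _ _ (fun x => ?_)
  rw [hRHS x]
  rcases le_or_gt x 0 with hx | hx
  · rw [Measure.map_apply hmeasmul measurableSet_Iic,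
      Measure.prod_apply (hmeasmul measurableSet_Iic)]
    have hwd : ∫⁻ g, betaOneMeasure N
          (Prod.mk g ⁻¹' ((fun p : ℝ × ℝ => p.1 * p.2) ⁻¹' Iic x))
          ∂(gammaMeasure ((N-1:ℕ):ℝ) (1/d))
        = ∫⁻ g, gammaPDF ((N-1:ℕ):ℝ) (1/d) g * betaOneMeasure N
          (Prod.mk g ⁻¹' ((fun p : ℝ × ℝ => p.1 * p.2) ⁻¹' Iic x)) ∂volume := by
      rw [gammaMeasure, lintegral_withDensity_eq_lintegral_mul_non_measurable _ hpdfmeas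
        (ae_of_all _ fun _ => ENNReal.ofReal_lt_top)]
      rfl
    rw [hwd]
    have hz : ∀ g : ℝ, gammaPDF ((N-1:ℕ):ℝ) (1/d) g * betaOneMeasure N
        (Prod.mk g ⁻¹' ((fun p : ℝ × ℝ => p.1 * p.2) ⁻¹' Iic x)) = 0 := by
      intro g
      rcases le_or_gt g 0 with hg | hg
      · rw [hpdfzero g hg, zero_mul]
      · have hset : Prod.mk g ⁻¹' ((fun p : ℝ × ℝ => p.1 * p.2) ⁻¹' Iic x) = Iic (x/g) := by
          ext y
          simp only [Set.mem_preimage, mem_Iic]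
          exact (le_div_iff₀' hg).symm
        rw [hset, hbIic _ (by rw [div_nonpos_iff]; right; exact ⟨hx, hg.le⟩), mul_zero]
    rw [lintegral_congr hz, lintegral_zero]
    rcases lt_or_eq_of_le hx with h | h
    · rw [if_neg (not_le.2 h)]; simp
    · rw [h]; simp
  · -- 0 < x
    have hIoi : (((gammaMeasure ((N-1:ℕ):ℝ) (1/d)).prod (betaOneMeasure N)).map
          (fun p : ℝ × ℝ => p.1 * p.2)) (Ioi x)
        = ENNReal.ofReal (Real.exp (-(1/d*x))) := by
      rw [Measure.map_apply hmeasmul measurableSet_Ioi,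
        Measure.prod_apply (hmeasmul measurableSet_Ioi)]
      have hwd : ∫⁻ g, betaOneMeasure N
            (Prod.mk g ⁻¹' ((fun p : ℝ × ℝ => p.1 * p.2) ⁻¹' Ioi x))
            ∂(gammaMeasure ((N-1:ℕ):ℝ) (1/d))
          = ∫⁻ g, gammaPDF ((N-1:ℕ):ℝ) (1/d) g * betaOneMeasure N
            (Prod.mk g ⁻¹' ((fun p : ℝ × ℝ => p.1 * p.2) ⁻¹' Ioi x)) ∂volume := by
        rw [gammaMeasure, lintegral_withDensity_eq_lintegral_mul_non_measurable _ hpdfmeas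
          (ae_of_all _ fun _ => ENNReal.ofReal_lt_top)]
        rfl
      rw [hwd]
      have hF3 : ∀ g : ℝ, gammaPDF ((N-1:ℕ):ℝ) (1/d) g * betaOneMeasure N
          (Prod.mk g ⁻¹' ((fun p : ℝ × ℝ => p.1 * p.2) ⁻¹' Ioi x))
          = (Ioi x).indicator (fun z => ENNReal.ofReal
              (C * ((z - x)^(N-2) * Real.exp (-(1/d*z))))) g := by
        intro g
        rcases le_or_gt g 0 with hg | hg
        · rw [hpdfzero g hg, zero_mul,
            Set.indicator_of_notMem (by simp only [mem_Ioi, not_lt]; linarith)]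
        · have hset : Prod.mk g ⁻¹' ((fun p : ℝ × ℝ => p.1 * p.2) ⁻¹' Ioi x) = Ioi (x/g) := by
            ext t
            simp only [Set.mem_preimage, mem_Ioi]
            exact (div_lt_iff₀' hg).symm
          rw [hset, beta_Ioi N hN]
          rcases le_or_gt g x with hgle | hglt
          · have h1 : (1:ℝ) ≤ x / g := (one_le_div hg).2 hgle
            rw [min_eq_right h1, max_eq_right zero_le_one, sub_self,
              zero_pow (by omega : N - 2 ≠ 0), ENNReal.ofReal_zero, mul_zero,
              Set.indicator_of_notMem (by simp only [mem_Ioi, not_lt]; exact hgle)]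
          · have h2 : x / g ≤ 1 := (div_le_one hg).2 hglt.le
            have h3 : (0:ℝ) ≤ x / g := le_of_lt (div_pos hx hg)
            rw [min_eq_left h2, max_eq_right h3,
              Set.indicator_of_mem (by exact hglt), hpdf g, if_pos hg.le,
              ← ENNReal.ofReal_mul (by positivity)]
            congr 1
            have hgx : g^(N-2) * (1 - x/g)^(N-2) = (g-x)^(N-2) := by
              rw [← mul_pow]
              congr 1
              field_simp
            calc C * (g^(N-2) * Real.exp (-(1/d*g))) * (1 - x/g)^(N-2)
                = C * (g^(N-2) * (1 - x/g)^(N-2)) * Real.exp (-(1/d*g)) := by ring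
              _ = C * (g-x)^(N-2) * Real.exp (-(1/d*g)) := by rw [hgx]
              _ = C * ((g-x)^(N-2) * Real.exp (-(1/d*g))) := by ring
      rw [lintegral_congr hF3]
      have hshift := lintegral_add_right_eq_self (μ := (volume : Measure ℝ))
        (fun z => (Ioi x).indicator (fun z => ENNReal.ofReal
          (C * ((z - x)^(N-2) * Real.exp (-(1/d*z))))) z) x
      rw [← hshift]
      have hpt2 : ∀ u : ℝ, (Ioi x).indicator (fun z => ENNReal.ofReal
            (C * ((z - x)^(N-2) * Real.exp (-(1/d*z))))) (u + x)
          = (if 0 < u then ENNReal.ofReal (C * (u^(N-2) * Real.exp (-(1/d*u)))) else 0)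
            * ENNReal.ofReal (Real.exp (-(1/d*x))) := by
        intro u
        rcases lt_or_ge 0 u with hu | hu
        · rw [Set.indicator_of_mem (by simpa using (lt_add_iff_pos_left x).2 hu), if_pos hu]
          rw [add_sub_cancel_right]
          rw [show Real.exp (-(1/d*(u+x))) = Real.exp (-(1/d*u)) * Real.exp (-(1/d*x)) by
            rw [← Real.exp_add]; congr 1; ring]
          rw [show C * (u^(N-2) * (Real.exp (-(1/d*u)) * Real.exp (-(1/d*x))))
            = C * (u^(N-2) * Real.exp (-(1/d*u))) * Real.exp (-(1/d*x)) by ring]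
          rw [ENNReal.ofReal_mul (by positivity)]
        · rw [Set.indicator_of_notMem (by simp only [mem_Ioi, not_lt]; linarith),
            if_neg (not_lt.2 hu), zero_mul]
      rw [lintegral_congr hpt2, lintegral_mul_const' _ _ ENNReal.ofReal_ne_top]
      have hone : (∫⁻ u, (if 0 < u then ENNReal.ofReal
          (C * (u^(N-2) * Real.exp (-(1/d*u)))) else 0)) = 1 := by
        rw [← lintegral_gammaPDF_eq_one (a := ((N-1:ℕ):ℝ)) (r := 1/d)
          (by exact_mod_cast (by omega : 0 < N - 1)) hr0]
        apply lintegral_congr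
        intro u
        rcases lt_or_ge 0 u with hu | hu
        · rw [if_pos hu, hpdf u, if_pos hu.le]
        · rw [if_neg (not_lt.2 hu), hpdfzero u hu]
      rw [hone, one_mul]
    have hcompl := measure_compl (μ := ((gammaMeasure ((N-1:ℕ):ℝ) (1/d)).prod
        (betaOneMeasure N)).map (fun p : ℝ × ℝ => p.1 * p.2)) (s := Ioi x) measurableSet_Ioi
      (measure_ne_top _ _)
    rw [compl_Ioi] at hcompl
    rw [hcompl, hIoi, measure_univ, if_pos hx.le,
      ENNReal.ofReal_sub _ (Real.exp_pos _).le, ENNReal.ofReal_one]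

lemma exp_laplace (r : ℝ) (hr : 0 < r) (s : ℝ) (hs : 0 ≤ s) :
    ∫ w, Real.exp (-s * w) ∂(expMeasure r) = r / (r + s) := by
  have hrs : 0 < r + s := by linarith
  have hprob : IsProbabilityMeasure (expMeasure r) := isProbabilityMeasure_expMeasure hr
  rw [integral_eq_lintegral_of_nonneg_ae (ae_of_all _ fun w => (Real.exp_pos _).le)
    (Continuous.aestronglyMeasurable (by continuity))]
  have hwd : ∫⁻ w, ENNReal.ofReal (Real.exp (-s * w)) ∂(expMeasure r)
      = ∫⁻ w, exponentialPDF r w * ENNReal.ofReal (Real.exp (-s * w)) ∂volume := by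
    have hm : Measurable (gammaPDF 1 r) := (measurable_gammaPDFReal _ _).ennreal_ofReal
    rw [expMeasure, gammaMeasure, lintegral_withDensity_eq_lintegral_mul_non_measurable _
      hm (ae_of_all _ fun _ => ENNReal.ofReal_lt_top)]
    rfl
  rw [hwd]
  have hpt : ∀ w, exponentialPDF r w * ENNReal.ofReal (Real.exp (-s * w))
      = ENNReal.ofReal (r / (r+s)) * exponentialPDF (r+s) w := by
    intro w
    rcases le_or_gt 0 w with hw | hw
    · rw [exponentialPDF_of_nonneg hw, exponentialPDF_of_nonneg hw,
        ← ENNReal.ofReal_mul (by positivity), ← ENNReal.ofReal_mul (by positivity)]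
      congr 1
      have hE : Real.exp (-(r*w)) * Real.exp (-s*w) = Real.exp (-((r+s)*w)) := by
        rw [← Real.exp_add]; congr 1; ring
      rw [mul_assoc, hE, ← mul_assoc, div_mul_cancel₀ _ hrs.ne']
    · rw [exponentialPDF_of_neg hw, exponentialPDF_of_neg hw, zero_mul, mul_zero]
  rw [lintegral_congr hpt, lintegral_const_mul' _ _ ENNReal.ofReal_ne_top,
    lintegral_exponentialPDF_eq_one hrs, mul_one, ENNReal.toReal_ofReal (by positivity)]

/-- If `G ~ Gamma(N,1)`, `Y ~ Q(N,B)` and `T ~ Beta(1,N-2)` are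
mutually independent, then `G·Y·T` is exponential with mean `δ = 2^(-B/(N-1))`;
equivalently `E[exp (-s·G·Y·T)] = 1/(1+sδ)` for every `s ≥ 0`. -/
theorem prod_gamma_quant_beta_exponential
    {Ω : Type*} [MeasurableSpace Ω] {μ : Measure Ω} [IsProbabilityMeasure μ]
    (N : ℕ) (hN : 3 ≤ N) (B : ℝ) (hB : 0 ≤ B)
    (G Y T : Ω → ℝ) (hG : Measurable G) (hY : Measurable Y) (hT : Measurable T)
    (hGdist : μ.map G = gammaMeasure N 1)
    (hYdist : μ.map Y = quantErrorMeasure N B)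
    (hTdist : μ.map T = betaOneMeasure N)
    (hindep : iIndepFun ![G, Y, T] μ) :
    μ.map (fun ω => G ω * Y ω * T ω)
        = expMeasure (1 / (2 : ℝ) ^ (-(B / (N - 1)))) ∧
      ∀ s : ℝ, 0 ≤ s →
        ∫ ω, Real.exp (-s * (G ω * Y ω * T ω)) ∂μ
          = 1 / (1 + s * (2 : ℝ) ^ (-(B / (N - 1)))) := by
  set d : ℝ := (2:ℝ) ^ (-(B / ((N:ℝ) - 1))) with hd
  have hd0 : 0 < d := rpow_pos_of_pos two_pos _
  have hprobY : IsProbabilityMeasure (quantErrorMeasure N B) := by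
    rw [← hYdist]; exact Measure.isProbabilityMeasure_map hY.aemeasurable
  have hprobT : IsProbabilityMeasure (betaOneMeasure N) := by
    rw [← hTdist]; exact Measure.isProbabilityMeasure_map hT.aemeasurable
  have hmeasvec : ∀ i, Measurable (![G, Y, T] i) := by
    intro i
    fin_cases i
    · simpa using hG
    · simpa using hY
    · simpa using hT
  have hGY : IndepFun G Y μ := by
    have h := hindep.indepFun (i := 0) (j := 1) (by decide)
    simpa using h
  have hpair : μ.map (fun ω => (G ω, Y ω)) = (μ.map G).prod (μ.map Y) :=
    (indepFun_iff_map_prod_eq_prod_map_map hG.aemeasurable hY.aemeasurable).1 hGY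
  have hmeasmul : Measurable fun p : ℝ × ℝ => p.1 * p.2 := measurable_fst.mul measurable_snd
  have hmapZ : μ.map (fun ω => G ω * Y ω) = gammaMeasure ((N - 1 : ℕ) : ℝ) (1/d) := by
    have h1 : μ.map (fun ω => G ω * Y ω)
        = (μ.map (fun ω => (G ω, Y ω))).map (fun p : ℝ × ℝ => p.1 * p.2) := by
      rw [Measure.map_map hmeasmul (hG.prodMk hY)]
      rfl
    rw [h1, hpair, hGdist, hYdist]
    exact stage1 N hN B hB
  have hZT : IndepFun (fun ω => G ω * Y ω) T μ := by
    have h := hindep.indepFun_mul_left hmeasvec 0 1 2 (by decide) (by decide)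
    have he : (![G,Y,T] 0 * ![G,Y,T] 1) = fun ω => G ω * Y ω := by
      funext ω
      simp [Matrix.cons_val_zero, Matrix.cons_val_one, Matrix.head_cons]
    have he2 : ![G,Y,T] 2 = T := by simp
    rw [he, he2] at h
    exact h
  have hpair2 : μ.map (fun ω => (G ω * Y ω, T ω))
      = (μ.map (fun ω => G ω * Y ω)).prod (μ.map T) :=
    (indepFun_iff_map_prod_eq_prod_map_map (hG.mul hY).aemeasurable hT.aemeasurable).1 hZT
  have hpart1 : μ.map (fun ω => G ω * Y ω * T ω) = expMeasure (1/d) := by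
    have h1 : μ.map (fun ω => G ω * Y ω * T ω)
        = (μ.map (fun ω => (G ω * Y ω, T ω))).map (fun p : ℝ × ℝ => p.1 * p.2) := by
      rw [Measure.map_map hmeasmul ((show Measurable (fun ω => G ω * Y ω) from hG.mul hY).prodMk hT)]
      rfl
    rw [h1, hpair2, hmapZ, hTdist]
    exact stage2 N hN d hd0
  refine ⟨hpart1, ?_⟩
  intro s hs
  have h2 : ∫ ω, Real.exp (-s * (G ω * Y ω * T ω)) ∂μ
      = ∫ w, Real.exp (-s * w) ∂(μ.map (fun ω => G ω * Y ω * T ω)) := by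
    rw [integral_map (show Measurable (fun ω => G ω * Y ω * T ω) from (hG.mul hY).mul hT).aemeasurable
      (Continuous.aestronglyMeasurable (by continuity))]
  rw [h2, hpart1, exp_laplace (1/d) (by positivity) s hs]
  have hden : (0:ℝ) < 1/d + s := by positivity
  have hden2 : (0:ℝ) < 1 + s * d := by positivity
  field_simp
end

section
/- Let K ≥ 1 be an integer and, for each k ∈ {1,…,K}, let λ_k > 0 be a real, N_k ≥ 2 an integer, and A_k > 0, I_k > 0 reals, where A_k = exp(ψ(N_k)) with ψ(x) = Γ′(x)/Γ(x) the digamma function, and I_k = 2·Σ_{i=1}^K λ_i ((P_i S_i)/(P_k S_k))^{2/β}(S_k/S_i) / ((β−2)·Σ_{i=1}^K λ_i ((P_i S_i)/(P_k S_k))^{2/β}) for given positive reals P_1,…,P_K, S_1,…,S_K and β > 2. Let B_total ≥ 0 and μ < 0, and define B*_k = (N_k−1)·log₂( A_k·(N_k−1−1/μ) / ((N_k−1)(A_k+I_k)) ). Suppose B*_k ≥ 0 for every k and Σ_{k=1}^K λ_k B*_k = B_total. Then for every vector (B_1,…,B_K) with B_k ≥ 0 for all k and Σ_{k=1}^K λ_k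 B_k ≤ B_total, one has Σ_{k=1}^K λ_k log₂(1 + (1 − 2^{−B_k/(N_k−1)})·A_k/I_k) ≤ Σ_{k=1}^K λ_k log₂(1 + (1 − 2^{−B*_k/(N_k−1)})·A_k/I_k). That is, B* maximizes the lower bound on the sum ergodic spectral efficiency subject to the per-unit-area feedback budget. -/
open Real Finset

noncomputable def digamma (x : ℝ) : ℝ := deriv Real.Gamma x / Real.Gamma x

lemma tangent_aux (n a ν Bs B : ℝ) (hn : 0 < n) (ha : 0 < a)
    (hBs : 0 ≤ Bs) (hB : 0 ≤ B)
    (hstat : a * (2:ℝ) ^ (-(Bs / n)) =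
      ν * n * (1 + (1 - (2:ℝ) ^ (-(Bs / n))) * a)) :
    Real.logb 2 (1 + (1 - (2:ℝ) ^ (-(B / n))) * a)
      ≤ Real.logb 2 (1 + (1 - (2:ℝ) ^ (-(Bs / n))) * a) + ν * (B - Bs) := by
  set t : ℝ := (2:ℝ) ^ (-(B / n)) with ht_def
  set ts : ℝ := (2:ℝ) ^ (-(Bs / n)) with hts_def
  have ht0 : 0 < t := Real.rpow_pos_of_pos two_pos _
  have hts0 : 0 < ts := Real.rpow_pos_of_pos two_pos _
  have ht1 : t ≤ 1 := Real.rpow_le_one_of_one_le_of_nonpos one_le_two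
    (by have := div_nonneg hB hn.le; linarith)
  have hts1 : ts ≤ 1 := Real.rpow_le_one_of_one_le_of_nonpos one_le_two
    (by have := div_nonneg hBs hn.le; linarith)
  set Ft : ℝ := 1 + (1 - t) * a with hFt_def
  set Fs : ℝ := 1 + (1 - ts) * a with hFs_def
  have hFt : 0 < Ft := by nlinarith
  have hFs : 0 < Fs := by nlinarith
  have hlog2 : (0:ℝ) < Real.log 2 := Real.log_pos one_lt_two
  have h1 : Real.log Ft ≤ Real.log Fs + (Ft - Fs) / Fs := by
    have h := Real.log_le_sub_one_of_pos (div_pos hFt hFs)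
    rw [Real.log_div hFt.ne' hFs.ne'] at h
    have he : Ft / Fs - 1 = (Ft - Fs) / Fs := by field_simp
    linarith [he ▸ h]
  set u : ℝ := Real.log 2 * (B - Bs) / n with hu_def
  have htexp : t = ts * Real.exp (-u) := by
    rw [ht_def, hts_def, Real.rpow_def_of_pos two_pos, Real.rpow_def_of_pos two_pos,
      ← Real.exp_add]
    congr 1
    rw [hu_def]
    field_simp
    ring
  have h2 : ts - t ≤ ts * u := by
    have he : 1 - Real.exp (-u) ≤ u := by nlinarith [Real.add_one_le_exp (-u)]
    nlinarith [mul_le_mul_of_nonneg_left he hts0.le, htexp]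
  have h3 : Ft - Fs ≤ ts * u * a := by
    have : Ft - Fs = (ts - t) * a := by rw [hFt_def, hFs_def]; ring
    nlinarith [mul_le_mul_of_nonneg_right h2 ha.le]
  have h4 : (Ft - Fs) / Fs ≤ ts * u * a / Fs := by gcongr
  have h5 : Real.log Ft ≤ Real.log Fs + ts * u * a / Fs := by linarith
  have heq : ts * u * a / Fs / Real.log 2 = ν * (B - Bs) := by
    rw [hu_def]
    field_simp
    linear_combination (B - Bs) * hstat
  have h6 : Real.log Ft / Real.log 2 ≤ (Real.log Fs + ts * u * a / Fs) / Real.log 2 :=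
    (div_le_div_iff_of_pos_right hlog2).mpr h5
  rw [add_div] at h6
  rw [Real.logb, Real.logb]
  linarith [heq ▸ h6]

lemma stat_aux (Av Iv n μ : ℝ) (hA0 : Av ≠ 0) (hI0 : Iv ≠ 0) (hμ0 : μ ≠ 0)
    (hAI : Av + Iv ≠ 0) (hnm0 : n - 1/μ ≠ 0) (hn0 : n ≠ 0) :
    (Av / Iv) * (n * (Av + Iv) / (Av * (n - 1/μ))) =
      (-μ) * n * (1 + (1 - n * (Av + Iv) / (Av * (n - 1/μ))) * (Av / Iv)) := by
  have e : n * μ - 1 = μ * (n - 1/μ) := by field_simp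
  have hd1 : n * μ - 1 ≠ 0 := e ▸ mul_ne_zero hμ0 hnm0
  field_simp [hd1]
  ring

/-- The water-filling feedback partition
`B*_k = (N_k-1)·log₂(A_k (N_k-1-1/μ) / ((N_k-1)(A_k+I_k)))` maximizes the lower
bound `∑_k λ_k log₂(1 + (1 - 2^{-B_k/(N_k-1)}) A_k / I_k)` on the sum ergodic
spectral efficiency subject to the per-unit-area feedback budget
`∑_k λ_k B_k ≤ B_total`. -/
theorem noncoop_feedback_partition_optimal
    (K : ℕ) (hK : 1 ≤ K)
    (lam : Fin K → ℝ) (N : Fin K → ℕ) (A I : Fin K → ℝ)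
    (P S : Fin K → ℝ) (β : ℝ) (hβ : 2 < β)
    (hlam : ∀ k, 0 < lam k) (hN : ∀ k, 2 ≤ N k)
    (hP : ∀ k, 0 < P k) (hS : ∀ k, 0 < S k)
    (hA : ∀ k, A k = Real.exp (digamma (N k)))
    (hI : ∀ k, I k =
      2 * (∑ i, lam i * ((P i * S i) / (P k * S k)) ^ (2 / β) * (S k / S i)) /
        ((β - 2) * ∑ i, lam i * ((P i * S i) / (P k * S k)) ^ (2 / β)))
    (hApos : ∀ k, 0 < A k) (hIpos : ∀ k, 0 < I k)
    (Btotal : ℝ) (hBtotal : 0 ≤ Btotal) (μ : ℝ) (hμ : μ < 0)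
    (Bstar : Fin K → ℝ)
    (hBstar : ∀ k, Bstar k =
      ((N k : ℝ) - 1) *
        Real.logb 2 (A k * ((N k : ℝ) - 1 - 1 / μ) / (((N k : ℝ) - 1) * (A k + I k))))
    (hBstarNonneg : ∀ k, 0 ≤ Bstar k)
    (hBstarSum : ∑ k, lam k * Bstar k = Btotal) :
    ∀ B : Fin K → ℝ, (∀ k, 0 ≤ B k) → (∑ k, lam k * B k ≤ Btotal) →
      ∑ k, lam k * Real.logb 2
          (1 + (1 - (2 : ℝ) ^ (-(B k / ((N k : ℝ) - 1)))) * A k / I k)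
        ≤ ∑ k, lam k * Real.logb 2
            (1 + (1 - (2 : ℝ) ^ (-(Bstar k / ((N k : ℝ) - 1)))) * A k / I k) := by
  intro B hB hBsum
  have key : ∀ k, Real.logb 2 (1 + (1 - (2:ℝ) ^ (-(B k / ((N k : ℝ) - 1)))) * A k / I k)
      ≤ Real.logb 2 (1 + (1 - (2:ℝ) ^ (-(Bstar k / ((N k : ℝ) - 1)))) * A k / I k)
        + (-μ) * (B k - Bstar k) := by
    intro k
    set n : ℝ := (N k : ℝ) - 1 with hn_def
    have hn : (1:ℝ) ≤ n := by
      have : (2:ℝ) ≤ (N k : ℝ) := by exact_mod_cast hN k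
      simp [hn_def]; linarith
    have hn0 : 0 < n := lt_of_lt_of_le one_pos hn
    have hμ0 : μ ≠ 0 := ne_of_lt hμ
    have hinvμ : 0 < -(1/μ) := by
      have := one_div_neg.mpr hμ
      linarith
    have hnm : 0 < n - 1/μ := by linarith
    set c : ℝ := A k * (n - 1/μ) / (n * (A k + I k)) with hc_def
    have hc : 0 < c := by
      apply div_pos (mul_pos (hApos k) hnm)
      exact mul_pos hn0 (by linarith [hApos k, hIpos k])
    have hts : (2:ℝ) ^ (-(Bstar k / n)) = c⁻¹ := by
      rw [hBstar k]
      have hexp : -(n * Real.logb 2 c / n) = Real.logb 2 c⁻¹ := by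
        rw [Real.logb_inv]
        field_simp
      rw [show ((N k : ℝ) - 1) = n from rfl, hexp,
        Real.rpow_logb two_pos (by norm_num) (inv_pos.mpr hc)]
    have hA0 := (hApos k).ne'
    have hI0 := (hIpos k).ne'
    have hAI : A k + I k ≠ 0 := (by linarith [hApos k, hIpos k] : (0:ℝ) < A k + I k).ne'
    have hnm0 : n - 1/μ ≠ 0 := hnm.ne'
    have hcinv : c⁻¹ = n * (A k + I k) / (A k * (n - 1/μ)) := by
      rw [hc_def, inv_div]
    have hstat : (A k / I k) * (2:ℝ) ^ (-(Bstar k / n)) =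
        (-μ) * n * (1 + (1 - (2:ℝ) ^ (-(Bstar k / n))) * (A k / I k)) := by
      rw [hts, hcinv]
      exact stat_aux (A k) (I k) n μ hA0 hI0 hμ0 hAI hnm0 hn0.ne'
    have h := tangent_aux n (A k / I k) (-μ) (Bstar k) (B k) hn0
      (div_pos (hApos k) (hIpos k)) (hBstarNonneg k) (hB k) hstat
    rw [mul_div_assoc, mul_div_assoc]
    exact h
  have step1 : ∑ k, lam k * Real.logb 2
        (1 + (1 - (2 : ℝ) ^ (-(B k / ((N k : ℝ) - 1)))) * A k / I k)
      ≤ ∑ k, (lam k * Real.logb 2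
        (1 + (1 - (2 : ℝ) ^ (-(Bstar k / ((N k : ℝ) - 1)))) * A k / I k)
        + (-μ) * (lam k * B k - lam k * Bstar k)) := by
    apply Finset.sum_le_sum
    intro k _
    have h := mul_le_mul_of_nonneg_left (key k) (hlam k).le
    have h2 : lam k * (Real.logb 2
        (1 + (1 - (2 : ℝ) ^ (-(Bstar k / ((N k : ℝ) - 1)))) * A k / I k)
        + (-μ) * (B k - Bstar k))
      = lam k * Real.logb 2
        (1 + (1 - (2 : ℝ) ^ (-(Bstar k / ((N k : ℝ) - 1)))) * A k / I k)
        + (-μ) * (lam k * B k - lam k * Bstar k) := by ring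
    linarith
  have step2 : ∑ k, (lam k * Real.logb 2
        (1 + (1 - (2 : ℝ) ^ (-(Bstar k / ((N k : ℝ) - 1)))) * A k / I k)
        + (-μ) * (lam k * B k - lam k * Bstar k))
      = (∑ k, lam k * Real.logb 2
        (1 + (1 - (2 : ℝ) ^ (-(Bstar k / ((N k : ℝ) - 1)))) * A k / I k))
        + (-μ) * ((∑ k, lam k * B k) - ∑ k, lam k * Bstar k) := by
    rw [Finset.sum_add_distrib, ← Finset.mul_sum, Finset.sum_sub_distrib]
  have h1 : (∑ k, lam k * B k) - ∑ k, lam k * Bstar k ≤ 0 := by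
    rw [hBstarSum]; linarith
  have h3 : (-μ) * ((∑ k, lam k * B k) - ∑ k, lam k * Bstar k) ≤ 0 :=
    mul_nonpos_of_nonneg_of_nonpos (by linarith) h1
  linarith
end

section
/- Let N ≥ 2 be an integer, A > 0, I > 0 reals, and μ < 0 a real such that B* := (N−1)·log₂( A·(N−1−1/μ) / ((N−1)(A+I)) ) satisfies B* ≥ 0. Then the function g(B) = A·2^{−B/(N−1)} / ((N−1)·(I + (1 − 2^{−B/(N−1)})·A)) is strictly decreasing on [0, ∞), g(B*) = −μ, and B* is the unique B ∈ [0, ∞) with g(B) = −μ. -/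
open Real

/-- With `N ≥ 2`, `A, I > 0`, `μ < 0` and
`B* = (N-1)·log₂(A(N-1-1/μ)/((N-1)(A+I))) ≥ 0`, the KKT function
`g(B) = A·2^{-B/(N-1)} / ((N-1)(I + (1 - 2^{-B/(N-1)})A))` is strictly decreasing
on `[0, ∞)`, satisfies `g(B*) = -μ`, and `B*` is the unique solution of
`g(B) = -μ` on `[0, ∞)`. -/
theorem noncoop_kkt_stationarity
    (N : ℕ) (hN : 2 ≤ N) (A I μ : ℝ) (hA : 0 < A) (hI : 0 < I) (hμ : μ < 0)
    (Bstar : ℝ)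
    (hBstar : Bstar = ((N : ℝ) - 1) *
      Real.logb 2 (A * ((N : ℝ) - 1 - 1 / μ) / (((N : ℝ) - 1) * (A + I))))
    (hBstarNonneg : 0 ≤ Bstar) :
    StrictAntiOn
        (fun B : ℝ => A * (2 : ℝ) ^ (-(B / ((N : ℝ) - 1))) /
          (((N : ℝ) - 1) * (I + (1 - (2 : ℝ) ^ (-(B / ((N : ℝ) - 1)))) * A)))
        (Set.Ici 0) ∧
      A * (2 : ℝ) ^ (-(Bstar / ((N : ℝ) - 1))) /
          (((N : ℝ) - 1) * (I + (1 - (2 : ℝ) ^ (-(Bstar / ((N : ℝ) - 1)))) * A))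
        = -μ ∧
      ∀ B ∈ Set.Ici (0 : ℝ),
        A * (2 : ℝ) ^ (-(B / ((N : ℝ) - 1))) /
            (((N : ℝ) - 1) * (I + (1 - (2 : ℝ) ^ (-(B / ((N : ℝ) - 1)))) * A))
          = -μ → B = Bstar := by
  have hn2 : (2:ℝ) ≤ (N:ℝ) := by exact_mod_cast hN
  set n : ℝ := (N : ℝ) - 1 with hn
  have hn1 : (1:ℝ) ≤ n := by simp only [hn]; linarith
  have hn0 : (0:ℝ) < n := by linarith
  have hμinv : 0 < -(1/μ) := by
    have : 1/μ < 0 := one_div_neg.mpr hμ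
    linarith
  have hμ0 : μ ≠ 0 := hμ.ne
  -- properties of t B := 2^(-(B/n))
  have htpos : ∀ B : ℝ, 0 < (2:ℝ) ^ (-(B/n)) := fun B =>
    rpow_pos_of_pos two_pos _
  have htle1 : ∀ B : ℝ, 0 ≤ B → (2:ℝ) ^ (-(B/n)) ≤ 1 := by
    intro B hB
    apply Real.rpow_le_one_of_one_le_of_nonpos (by norm_num)
    have : 0 ≤ B / n := div_nonneg hB hn0.le
    linarith
  have hdenpos : ∀ B : ℝ, 0 ≤ B →
      0 < n * (I + (1 - (2:ℝ) ^ (-(B/n))) * A) := by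
    intro B hB
    have h1 := htle1 B hB
    have h2 : 0 ≤ (1 - (2:ℝ) ^ (-(B/n))) * A :=
      mul_nonneg (by linarith) hA.le
    have : 0 < I + (1 - (2:ℝ) ^ (-(B/n))) * A := by linarith
    exact mul_pos hn0 this
  have hanti : StrictAntiOn
      (fun B : ℝ => A * (2 : ℝ) ^ (-(B / n)) /
        (n * (I + (1 - (2 : ℝ) ^ (-(B / n))) * A))) (Set.Ici 0) := by
    intro x hx y hy hxy
    simp only
    have hx0 : (0:ℝ) ≤ x := hx
    have hy0 : (0:ℝ) ≤ y := hy
    have hab : (2:ℝ) ^ (-(y/n)) < (2:ℝ) ^ (-(x/n)) := by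
      apply Real.rpow_lt_rpow_left_iff (x := (2:ℝ)) one_lt_two |>.mpr
      have : x / n < y / n := (div_lt_div_iff_of_pos_right hn0).mpr hxy
      linarith
    set a := (2:ℝ) ^ (-(x/n)) with ha
    set b := (2:ℝ) ^ (-(y/n)) with hb
    have hbpos : 0 < b := htpos y
    have ha1 : a ≤ 1 := htle1 x hx0
    have hdx := hdenpos x hx0
    have hdy := hdenpos y hy0
    rw [div_lt_div_iff₀ hdy hdx]
    have key : 0 < A * n * (I + A) * (a - b) :=
      mul_pos (mul_pos (mul_pos hA hn0) (by linarith)) (by linarith)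
    nlinarith [key]
  -- value at Bstar
  have hX : 0 < A * (n - 1/μ) / (n * (A + I)) := by
    apply div_pos (mul_pos hA (by linarith)) (mul_pos hn0 (by linarith))
  have htB : (2:ℝ) ^ (-(Bstar/n)) = (A * (n - 1/μ) / (n * (A + I)))⁻¹ := by
    have : Bstar / n = Real.logb 2 (A * (n - 1/μ) / (n * (A + I))) := by
      rw [hBstar]; field_simp
    rw [this, Real.rpow_neg (by norm_num), Real.rpow_logb two_pos (by norm_num) hX]
  have hval : A * (2 : ℝ) ^ (-(Bstar / n)) /
      (n * (I + (1 - (2 : ℝ) ^ (-(Bstar / n))) * A)) = -μ := by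
    have hd := hdenpos Bstar hBstarNonneg
    have hμn : μ * n - 1 < 0 := by nlinarith [mul_pos hn0 (neg_pos.mpr hμ)]
    have hXrw : A * (n - 1/μ) / (n * (A + I)) =
        (A * (μ * n - 1)) / (μ * (n * (A + I))) := by
      rw [div_eq_div_iff (mul_pos hn0 (by linarith)).ne'
        (by exact mul_ne_zero hμ0 (mul_pos hn0 (by linarith)).ne')]
      field_simp
    rw [div_eq_iff hd.ne', htB, hXrw, inv_div]
    have hc1 : A * (μ * n - 1) ≠ 0 := mul_ne_zero hA.ne' (ne_of_lt hμn)
    have hc2 : μ * n - 1 ≠ 0 := ne_of_lt hμn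
    field_simp
    ring
  refine ⟨hanti, hval, ?_⟩
  intro B hB hgB
  exact hanti.injOn hB (Set.mem_Ici.mpr hBstarNonneg) (by rw [hgB, hval])
end

section
/- Let L ≥ 2 be an integer, let δ_2, …, δ_L be positive reals, and let B_total ≥ 0. Define B*_ℓ = B_total/(L−1) + (L−1)·log₂( δ_ℓ / (∏_{j=2}^{L} δ_j)^{1/(L−1)} ) for ℓ = 2, …, L. Then Σ_{ℓ=2}^{L} B*_ℓ = B_total, and if B*_ℓ ≥ 0 for every ℓ, then for every real γ > 0 and every vector (B_2, …, B_L) with B_ℓ ≥ 0 for all ℓ and Σ_{ℓ=2}^{L} B_ℓ ≤ B_total, one has ∏_{ℓ=2}^{L} (1 + γ·δ_ℓ·2^{−B*_ℓ/(L−1)}) ≤ ∏_{ℓ=2}^{L} (1 + γ·δ_ℓ·2^{−B_ℓ/(L−1)}). In particular, the same allocation (B*_2,…,B*_L) is optimal simultaneously for every threshold γ > 0. -/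
open Real Finset

lemma aux_mahler {ι : Type*} (s : Finset ι) (hs : s.Nonempty) (x : ι → ℝ)
    (hx : ∀ i ∈ s, 0 < x i) :
    1 + (∏ i ∈ s, x i) ^ ((s.card : ℝ)⁻¹) ≤ (∏ i ∈ s, (1 + x i)) ^ ((s.card : ℝ)⁻¹) := by
  have hc : (0:ℝ) < (s.card : ℝ) := by
    exact_mod_cast Finset.card_pos.mpr hs
  have hone : ∀ i ∈ s, (0:ℝ) < 1 + x i := fun i hi => by linarith [hx i hi]
  have hA : 0 < ∏ i ∈ s, x i := Finset.prod_pos hx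
  have hQ : 0 < ∏ i ∈ s, (1 + x i) := Finset.prod_pos hone
  have hw : ∀ i ∈ s, (0:ℝ) ≤ (s.card : ℝ)⁻¹ := fun i _ => by positivity
  have hw' : ∑ _i ∈ s, ((s.card : ℝ))⁻¹ = 1 := by
    rw [Finset.sum_const, nsmul_eq_mul]
    field_simp
  have h1 := Real.geom_mean_le_arith_mean_weighted s (fun _ => ((s.card : ℝ))⁻¹)
    (fun i => x i / (1 + x i)) hw hw'
    (fun i hi => le_of_lt (div_pos (hx i hi) (hone i hi)))
  have h2 := Real.geom_mean_le_arith_mean_weighted s (fun _ => ((s.card : ℝ))⁻¹)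
    (fun i => 1 / (1 + x i)) hw hw'
    (fun i hi => le_of_lt (div_pos one_pos (hone i hi)))
  have hsum : (∑ i ∈ s, ((s.card : ℝ))⁻¹ * (x i / (1 + x i)))
      + (∑ i ∈ s, ((s.card : ℝ))⁻¹ * (1 / (1 + x i))) = 1 := by
    rw [← Finset.sum_add_distrib, ← hw']
    refine Finset.sum_congr rfl fun i hi => ?_
    have h := (hone i hi).ne'
    rw [hw', ← mul_add, ← add_div, add_comm (x i) 1, div_self h, mul_one]
  have hp1 : ∏ i ∈ s, (x i / (1 + x i)) ^ ((s.card : ℝ))⁻¹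
      = (∏ i ∈ s, x i) ^ ((s.card : ℝ))⁻¹ / (∏ i ∈ s, (1 + x i)) ^ ((s.card : ℝ))⁻¹ := by
    rw [Real.finset_prod_rpow s _ (fun i hi => le_of_lt (div_pos (hx i hi) (hone i hi))),
      Finset.prod_div_distrib, Real.div_rpow hA.le hQ.le]
  have hp2 : ∏ i ∈ s, (1 / (1 + x i)) ^ ((s.card : ℝ))⁻¹
      = 1 / (∏ i ∈ s, (1 + x i)) ^ ((s.card : ℝ))⁻¹ := by
    rw [Real.finset_prod_rpow s _ (fun i hi => le_of_lt (div_pos one_pos (hone i hi))),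
      Finset.prod_div_distrib, Finset.prod_const_one, Real.div_rpow zero_le_one hQ.le,
      Real.one_rpow]
  have hQr : 0 < (∏ i ∈ s, (1 + x i)) ^ ((s.card : ℝ))⁻¹ := Real.rpow_pos_of_pos hQ _
  have key : ((∏ i ∈ s, x i) ^ ((s.card : ℝ))⁻¹ + 1) / (∏ i ∈ s, (1 + x i)) ^ ((s.card : ℝ))⁻¹ ≤ 1 := by
    rw [add_div]
    calc (∏ i ∈ s, x i) ^ ((s.card : ℝ))⁻¹ / (∏ i ∈ s, (1 + x i)) ^ ((s.card : ℝ))⁻¹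
        + 1 / (∏ i ∈ s, (1 + x i)) ^ ((s.card : ℝ))⁻¹
        ≤ (∑ i ∈ s, ((s.card : ℝ))⁻¹ * (x i / (1 + x i)))
          + (∑ i ∈ s, ((s.card : ℝ))⁻¹ * (1 / (1 + x i))) := by
          rw [← hp1, ← hp2]; exact add_le_add h1 h2
      _ = 1 := hsum
  have := (div_le_one hQr).mp key
  linarith

/-- The cooperative feedback partition
`B*_ℓ = B_total/(L-1) + (L-1) log₂(δ_ℓ / (∏_j δ_j)^{1/(L-1)})`, `ℓ = 2, …, L`,
sums to `B_total`; and if all `B*_ℓ ≥ 0`, then for every SIR threshold `γ > 0`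
it minimizes `∏_{ℓ=2}^{L} (1 + γ δ_ℓ 2^{-B_ℓ/(L-1)})` among all nonnegative
allocations with `∑ B_ℓ ≤ B_total`. -/
theorem coop_feedback_partition_optimal
    (L : ℕ) (hL : 2 ≤ L) (δ : ℕ → ℝ) (hδ : ∀ ℓ ∈ Finset.Icc 2 L, 0 < δ ℓ)
    (Btotal : ℝ) (hBtotal : 0 ≤ Btotal) (Bstar : ℕ → ℝ)
    (hBstar : ∀ ℓ ∈ Finset.Icc 2 L, Bstar ℓ =
      Btotal / ((L : ℝ) - 1) + ((L : ℝ) - 1) *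
        Real.logb 2 (δ ℓ / (∏ j ∈ Finset.Icc 2 L, δ j) ^ (1 / ((L : ℝ) - 1)))) :
    (∑ ℓ ∈ Finset.Icc 2 L, Bstar ℓ = Btotal) ∧
      ((∀ ℓ ∈ Finset.Icc 2 L, 0 ≤ Bstar ℓ) →
        ∀ γ : ℝ, 0 < γ → ∀ B : ℕ → ℝ,
          (∀ ℓ ∈ Finset.Icc 2 L, 0 ≤ B ℓ) →
          (∑ ℓ ∈ Finset.Icc 2 L, B ℓ ≤ Btotal) →
          ∏ ℓ ∈ Finset.Icc 2 L, (1 + γ * δ ℓ * (2 : ℝ) ^ (-(Bstar ℓ / ((L : ℝ) - 1))))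
            ≤ ∏ ℓ ∈ Finset.Icc 2 L,
                (1 + γ * δ ℓ * (2 : ℝ) ^ (-(B ℓ / ((L : ℝ) - 1))))) := by
  set s : Finset ℕ := Finset.Icc 2 L with hs_def
  have hcard : s.card = L - 1 := by rw [hs_def, Nat.card_Icc]; omega
  set N : ℝ := (L : ℝ) - 1 with hN_def
  have hL2 : (2:ℝ) ≤ (L:ℝ) := by exact_mod_cast hL
  have hN : 0 < N := by rw [hN_def]; linarith
  have hcardR : (s.card : ℝ) = N := by
    rw [hcard, hN_def, Nat.cast_sub (by omega)]; simp
  have hsne : s.Nonempty := Finset.card_pos.mp (by omega)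
  have hP : 0 < ∏ j ∈ s, δ j := Finset.prod_pos hδ
  set P : ℝ := ∏ j ∈ s, δ j with hP_def
  set d : ℝ := P ^ (1 / N) with hd_def
  have hd : 0 < d := Real.rpow_pos_of_pos hP _
  have hdpow : d ^ s.card = P := by
    rw [hd_def, ← Real.rpow_natCast (P ^ (1/N)) s.card, ← Real.rpow_mul hP.le, hcardR,
      one_div, inv_mul_cancel₀ hN.ne', Real.rpow_one]
  have hsum : ∑ ℓ ∈ s, Bstar ℓ = Btotal := by
    have h1 : ∑ ℓ ∈ s, Bstar ℓ = ∑ ℓ ∈ s, (Btotal / N + N * Real.logb 2 (δ ℓ / d)) :=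
      Finset.sum_congr rfl fun ℓ hℓ => hBstar ℓ hℓ
    rw [h1, Finset.sum_add_distrib, Finset.sum_const, ← Finset.mul_sum,
      ← Real.logb_prod s _ (fun ℓ hℓ => (div_pos (hδ ℓ hℓ) hd).ne')]
    have h2 : ∏ ℓ ∈ s, (δ ℓ / d) = 1 := by
      rw [Finset.prod_div_distrib, Finset.prod_const, hdpow, ← hP_def, div_self hP.ne']
    rw [h2, Real.logb_one, mul_zero, add_zero, nsmul_eq_mul, hcardR,
      mul_div_cancel₀ _ hN.ne']
  refine ⟨hsum, ?_⟩
  intro _hBs γ hγ B hB hBsum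
  have hkey : ∀ ℓ ∈ s, δ ℓ * (2:ℝ) ^ (-(Bstar ℓ / N)) = d * (2:ℝ) ^ (-(Btotal / (N * N))) := by
    intro ℓ hℓ
    have hδℓ := hδ ℓ hℓ
    have hexp : Bstar ℓ / N = Btotal / (N * N) + Real.logb 2 (δ ℓ / d) := by
      rw [hBstar ℓ hℓ]
      field_simp
    rw [hexp, neg_add, Real.rpow_add two_pos, ← Real.logb_inv,
      Real.rpow_logb two_pos (by norm_num) (inv_pos.mpr (div_pos hδℓ hd)), inv_div]
    field_simp
  have hLHS : ∏ ℓ ∈ s, (1 + γ * δ ℓ * (2:ℝ) ^ (-(Bstar ℓ / N)))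
      = (1 + γ * (d * (2:ℝ) ^ (-(Btotal / (N * N))))) ^ s.card := by
    rw [← Finset.prod_const]
    refine Finset.prod_congr rfl fun ℓ hℓ => ?_
    rw [mul_assoc, hkey ℓ hℓ]
  set K : ℝ := d * (2:ℝ) ^ (-(Btotal / (N * N))) with hK_def
  have hK : 0 < K := by
    rw [hK_def]; positivity
  set x : ℕ → ℝ := fun ℓ => γ * δ ℓ * (2:ℝ) ^ (-(B ℓ / N)) with hx_def
  have hx : ∀ ℓ ∈ s, 0 < x ℓ := fun ℓ hℓ => by
    have := hδ ℓ hℓ; rw [hx_def]; positivity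
  have hQ : 0 < ∏ ℓ ∈ s, (1 + x ℓ) := Finset.prod_pos fun ℓ hℓ => by linarith [hx ℓ hℓ]
  have hprodx : ∏ ℓ ∈ s, x ℓ = γ ^ s.card * P * (2:ℝ) ^ (-((∑ ℓ ∈ s, B ℓ) / N)) := by
    rw [hx_def]
    rw [Finset.prod_mul_distrib, Finset.prod_mul_distrib, Finset.prod_const, ← hP_def,
      ← Real.rpow_sum_of_pos two_pos]
    congr 1
    rw [Finset.sum_div, ← Finset.sum_neg_distrib]
  have hGM : γ * K ≤ (∏ ℓ ∈ s, x ℓ) ^ ((s.card : ℝ))⁻¹ := by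
    have hrw : (∏ ℓ ∈ s, x ℓ) ^ ((s.card : ℝ))⁻¹
        = γ * (P ^ (N⁻¹) * (2:ℝ) ^ (-((∑ ℓ ∈ s, B ℓ) / N) * N⁻¹)) := by
      rw [hprodx, hcardR, Real.mul_rpow (by positivity) (by positivity),
        Real.mul_rpow (by positivity) (by positivity),
        ← Real.rpow_natCast γ s.card, ← Real.rpow_mul hγ.le, hcardR,
        mul_inv_cancel₀ hN.ne', Real.rpow_one,
        ← Real.rpow_mul (by norm_num : (0:ℝ) ≤ 2), mul_assoc]
    rw [hrw, hK_def, hd_def, one_div]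
    have h2le : (2:ℝ) ^ (-(Btotal / (N * N))) ≤ (2:ℝ) ^ (-((∑ ℓ ∈ s, B ℓ) / N) * N⁻¹) := by
      apply (Real.rpow_le_rpow_left_iff one_lt_two).mpr
      rw [neg_mul, neg_le_neg_iff, ← div_eq_mul_inv, div_div]
      gcongr
    exact mul_le_mul_of_nonneg_left
      (mul_le_mul_of_nonneg_left h2le (by positivity)) hγ.le
  have hcardne : ((s.card : ℝ))⁻¹ * (s.card : ℝ) = 1 := by
    rw [hcardR]; exact inv_mul_cancel₀ hN.ne'
  calc ∏ ℓ ∈ s, (1 + γ * δ ℓ * (2:ℝ) ^ (-(Bstar ℓ / N)))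
      = (1 + γ * K) ^ s.card := hLHS
    _ ≤ (1 + (∏ ℓ ∈ s, x ℓ) ^ ((s.card : ℝ))⁻¹) ^ s.card := by
        apply pow_le_pow_left₀ (by nlinarith) (by linarith)
    _ ≤ ((∏ ℓ ∈ s, (1 + x ℓ)) ^ ((s.card : ℝ))⁻¹) ^ s.card :=
        pow_le_pow_left₀
          (by have := Real.rpow_nonneg (Finset.prod_pos hx).le ((s.card : ℝ))⁻¹; linarith)
          (aux_mahler s hsne x hx) s.card
    _ = ∏ ℓ ∈ s, (1 + x ℓ) := by
        rw [← Real.rpow_natCast ((∏ ℓ ∈ s, (1 + x ℓ)) ^ ((s.card : ℝ))⁻¹) s.card,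
          ← Real.rpow_mul hQ.le, hcardne, Real.rpow_one]
end

section
/- Let L ≥ 2 be an integer, β > 0 a real, and B_total a real. For each ℓ ∈ {2, …, L} let X_ℓ be a random variable on [0, 1] with probability density f_ℓ(x) = 2(ℓ−1)·x·(1−x²)^{ℓ−2}, and set δ_ℓ = X_ℓ^β. Then for each ℓ, E[ B_total/(L−1) + (L−1)·log₂ δ_ℓ − Σ_{j=2}^{L} log₂ δ_j ] = B_total/(L−1) − (β(L−1)/(2 ln 2))·H_{ℓ−1} + (β/(2 ln 2))·Σ_{j=2}^{L} H_{j−1}, and these right-hand sides sum over ℓ = 2, …, L to B_total. -/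
open Real Finset MeasureTheory intervalIntegral
open scoped ENNReal NNReal

/-- The `n`-th harmonic number `H_n = ∑_{i=1}^n 1/i` as a real number. -/
noncomputable def harmonicNum (n : ℕ) : ℝ := ∑ i ∈ Finset.range n, (1 : ℝ) / (i + 1)

lemma int_pow_log (m : ℕ) :
    ∫ x in (0:ℝ)..1, x ^ (m + 1) * Real.log x = -(1 / ((m : ℝ) + 2) ^ 2) := by
  have h01 : (0:ℝ) ≤ 1 := zero_le_one
  have hcont : Continuous fun x : ℝ => x ^ (m+1) * Real.log x := by
    have : (fun x : ℝ => x ^ (m+1) * Real.log x) = fun x => x ^ m * (x * Real.log x) := by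
      ext x; ring
    rw [this]
    exact (continuous_pow m).mul Real.continuous_mul_log
  set F : ℝ → ℝ := fun x => x ^ (m+1) * (x * Real.log x) / ((m:ℝ)+2) - x ^ (m+2) / ((m:ℝ)+2)^2 with hF
  have hFc : ContinuousOn F (Set.Icc 0 1) := by
    apply Continuous.continuousOn
    exact (((continuous_pow (m+1)).mul Real.continuous_mul_log).div_const _).sub
      ((continuous_pow (m+2)).div_const _)
  have hderiv : ∀ x ∈ Set.Ioo (0:ℝ) 1, HasDerivWithinAt F (x ^ (m+1) * Real.log x) (Set.Ioi x) x := by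
    intro x hx
    have hx0 : x ≠ 0 := ne_of_gt hx.1
    have h1 : HasDerivAt (fun x : ℝ => x ^ (m+2) * Real.log x)
        (((m:ℝ)+2) * x ^ (m+1) * Real.log x + x ^ (m+2) * x⁻¹) x := by
      have := (hasDerivAt_pow (m+2) x).fun_mul (Real.hasDerivAt_log hx0)
      refine this.congr_deriv ?_
      push_cast [show m+2-1 = m+1 from rfl]; ring
    have h2 : HasDerivAt F (x ^ (m+1) * Real.log x) x := by
      have hm2 : ((m:ℝ)+2) ≠ 0 := by positivity
      have hFx : F = fun x => x ^ (m+2) * Real.log x / ((m:ℝ)+2) - x ^ (m+2) / ((m:ℝ)+2)^2 := by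
        ext y; rw [hF]; ring
      rw [hFx]
      have := (h1.div_const ((m:ℝ)+2)).sub ((hasDerivAt_pow (m+2) x).div_const (((m:ℝ)+2)^2))
      refine this.congr_deriv ?_
      push_cast [show m+2-1 = m+1 from rfl]
      field_simp
      ring
    exact h2.hasDerivWithinAt
  have := intervalIntegral.integral_eq_sub_of_hasDeriv_right_of_le h01 hFc hderiv
    (hcont.intervalIntegrable 0 1)
  rw [this, hF]
  norm_num

-- ∑_{k=0}^{m} (-1)^k C(m,k)/(k+1) = 1/(m+1)
lemma ident0 (m : ℕ) :
    ∑ k ∈ range (m+1), (-1:ℝ)^k * (m.choose k) / (k+1) = 1/((m:ℝ)+1) := by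
  have key : ∀ k ∈ range (m+1), (-1:ℝ)^k * (m.choose k) / (k+1)
      = (-1:ℝ)^k * ((m+1).choose (k+1)) / ((m:ℝ)+1) := by
    intro k hk
    have h := Nat.add_one_mul_choose_eq m k
    have h' : ((m:ℝ)+1) * (m.choose k) = ((m+1).choose (k+1)) * ((k:ℝ)+1) := by
      exact_mod_cast congrArg (Nat.cast : ℕ → ℝ) h
    have hk1 : ((k:ℝ)+1) ≠ 0 := by positivity
    have hm1 : ((m:ℝ)+1) ≠ 0 := by positivity
    rw [div_eq_div_iff hk1 hm1, mul_assoc, mul_assoc,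
      mul_comm ((m.choose k : ℝ)) ((m:ℝ)+1), h']
  rw [Finset.sum_congr rfl key]
  have halt : ∑ j ∈ range (m+2), (-1:ℤ)^j * ((m+1).choose j) = 0 := by
    have := Int.alternating_sum_range_choose (n := m+1)
    simp [Nat.succ_ne_zero] at this
    convert this using 2
  have halt' : ∑ k ∈ range (m+1), (-1:ℝ)^k * ((m+1).choose (k+1)) = 1 := by
    have h2 : ∑ j ∈ range (m+2), (-1:ℝ)^j * ((m+1).choose j) = 0 := by
      exact_mod_cast congrArg (Int.cast : ℤ → ℝ) halt
    rw [Finset.sum_range_succ'] at h2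
    simp at h2
    have h3 : ∑ k ∈ range (m+1), (-1:ℝ)^(k+1) * ((m+1).choose (k+1)) = -1 := by
      linarith
    calc ∑ k ∈ range (m+1), (-1:ℝ)^k * ((m+1).choose (k+1))
        = -∑ k ∈ range (m+1), (-1:ℝ)^(k+1) * ((m+1).choose (k+1)) := by
          rw [← Finset.sum_neg_distrib]; apply Finset.sum_congr rfl; intro k _; ring
      _ = 1 := by rw [h3]; ring
  rw [← Finset.sum_div, halt']

lemma choose_key (m k : ℕ) :
    ((m.choose k : ℝ)) / ((k:ℝ)+1) = (((m+1).choose (k+1) : ℝ)) / ((m:ℝ)+1) := by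
  have h := Nat.add_one_mul_choose_eq m k
  have h' : ((m:ℝ)+1) * (m.choose k) = ((m+1).choose (k+1)) * ((k:ℝ)+1) := by
    exact_mod_cast congrArg (Nat.cast : ℕ → ℝ) h
  have hk1 : ((k:ℝ)+1) ≠ 0 := by positivity
  have hm1 : ((m:ℝ)+1) ≠ 0 := by positivity
  rw [div_eq_div_iff hk1 hm1, mul_comm, h']

lemma ident1 (m : ℕ) :
    ∑ k ∈ range m, (-1:ℝ)^k * (m.choose (k+1)) / (k+1) = harmonicNum m := by
  induction m with
  | zero => simp [harmonicNum]
  | succ m ih =>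
    have hsplit : ∀ k ∈ range (m+1), (-1:ℝ)^k * ((m+1).choose (k+1)) / (k+1)
        = (-1:ℝ)^k * (m.choose k) / (k+1) + (-1:ℝ)^k * (m.choose (k+1)) / (k+1) := by
      intro k _
      have : ((m+1).choose (k+1) : ℝ) = (m.choose k : ℝ) + (m.choose (k+1) : ℝ) := by
        exact_mod_cast congrArg (Nat.cast : ℕ → ℝ) (Nat.choose_succ_succ m k)
      rw [this]; ring
    rw [Finset.sum_congr rfl hsplit, Finset.sum_add_distrib, ident0 m]
    have h2 : ∑ k ∈ range (m+1), (-1:ℝ)^k * (m.choose (k+1)) / (k+1)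
        = ∑ k ∈ range m, (-1:ℝ)^k * (m.choose (k+1)) / (k+1) := by
      rw [Finset.sum_range_succ, Nat.choose_succ_self]
      simp
    rw [h2, ih]
    rw [show harmonicNum (m+1) = harmonicNum m + 1/((m:ℝ)+1) by
      rw [harmonicNum, Finset.sum_range_succ, ← harmonicNum]]
    ring

lemma ident2 (m : ℕ) :
    ∑ k ∈ range (m+1), (-1:ℝ)^k * (m.choose k) / (((k:ℝ)+1)^2)
      = harmonicNum (m+1) / ((m:ℝ)+1) := by
  have key : ∀ k ∈ range (m+1), (-1:ℝ)^k * (m.choose k) / (((k:ℝ)+1)^2)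
      = ((-1:ℝ)^k * ((m+1).choose (k+1)) / ((k:ℝ)+1)) / ((m:ℝ)+1) := by
    intro k _
    have h := choose_key m k
    have hk1 : ((k:ℝ)+1) ≠ 0 := by positivity
    calc (-1:ℝ)^k * (m.choose k) / (((k:ℝ)+1)^2)
        = (-1:ℝ)^k * ((m.choose k : ℝ) / ((k:ℝ)+1)) / ((k:ℝ)+1) := by
          rw [pow_two]; field_simp
      _ = ((-1:ℝ)^k * ((m+1).choose (k+1)) / ((k:ℝ)+1)) / ((m:ℝ)+1) := by
          rw [h]; ring
  rw [Finset.sum_congr rfl key, ← Finset.sum_div, ident1 (m+1)]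

lemma cont_pow_log (m : ℕ) : Continuous fun x : ℝ => x ^ (m + 1) * Real.log x := by
  have : (fun x : ℝ => x ^ (m+1) * Real.log x) = fun x => x ^ m * (x * Real.log x) := by
    ext x; ring
  rw [this]
  exact (continuous_pow m).mul Real.continuous_mul_log

lemma key_integral (m : ℕ) :
    ∫ x in (0:ℝ)..1, 2 * ((m:ℝ)+1) * x * (1 - x^2)^m * Real.log x
      = -(harmonicNum (m+1)) / 2 := by
  have hm1 : ((m:ℝ)+1) ≠ 0 := by positivity
  have hexp : ∀ x : ℝ, 2*((m:ℝ)+1)*x*(1-x^2)^m * Real.log x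
      = ∑ k ∈ range (m+1),
          (2*((m:ℝ)+1)*(m.choose k)*(-1)^k) * (x^(2*k+1) * Real.log x) := by
    intro x
    have h : (1 - x^2)^m = ∑ k ∈ range (m+1), (-x^2)^k * (m.choose k) := by
      rw [show (1 - x^2) = (-x^2 + 1) by ring, add_pow]
      simp
    rw [h, Finset.mul_sum, Finset.sum_mul]
    apply Finset.sum_congr rfl
    intro k _
    rw [neg_pow, ← pow_mul, pow_succ]
    ring
  rw [intervalIntegral.integral_congr (g := fun x => ∑ k ∈ range (m+1),
      (2*((m:ℝ)+1)*(m.choose k)*(-1)^k) * (x^(2*k+1) * Real.log x))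
      (fun x _ => hexp x)]
  rw [intervalIntegral.integral_finset_sum]
  · have hterm : ∀ k ∈ range (m+1),
        (∫ x in (0:ℝ)..1, (2*((m:ℝ)+1)*(m.choose k)*(-1)^k) * (x^(2*k+1) * Real.log x))
          = (-(((m:ℝ)+1)/2)) * ((-1:ℝ)^k * (m.choose k) / (((k:ℝ)+1)^2)) := by
      intro k _
      rw [intervalIntegral.integral_const_mul, int_pow_log (2*k)]
      have h4 : (((2*k : ℕ):ℝ)+2)^2 = 4 * (((k:ℝ)+1)^2) := by push_cast; ring
      rw [h4]
      have hk1 : (((k:ℝ)+1)^2) ≠ 0 := by positivity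
      field_simp
      ring
    rw [Finset.sum_congr rfl hterm, ← Finset.mul_sum, ident2 m]
    field_simp
  · intro k _
    apply Continuous.intervalIntegrable
    exact continuous_const.mul (cont_pow_log (2*k))

lemma dist_lemma {Ω : Type*} [MeasurableSpace Ω] {μ : Measure Ω}
    (ℓ : ℕ) (hℓ : 2 ≤ ℓ) (β : ℝ) (hβ : 0 < β) (X : Ω → ℝ) (hX : Measurable X)
    (hmap : μ.map X = volume.withDensity (fun x =>
        if 0 ≤ x ∧ x ≤ 1 then
          ENNReal.ofReal (2 * ((ℓ : ℝ) - 1) * x * (1 - x ^ 2) ^ (ℓ - 2))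
        else 0)) :
    Integrable (fun ω => Real.logb 2 (X ω ^ β)) μ ∧
    ∫ ω, Real.logb 2 (X ω ^ β) ∂μ
      = -(β / (2 * Real.log 2)) * harmonicNum (ℓ - 1) := by
  obtain ⟨m, rfl⟩ : ∃ m, ℓ = m + 2 := ⟨ℓ - 2, by omega⟩
  have hcast : ((m + 2 : ℕ) : ℝ) - 1 = (m : ℝ) + 1 := by push_cast; ring
  have hm12 : m + 2 - 1 = m + 1 := by omega
  have hm22 : m + 2 - 2 = m := by omega
  -- the real density
  set d : ℝ → ℝ := fun x =>
    if 0 ≤ x ∧ x ≤ 1 then 2 * ((m:ℝ) + 1) * x * (1 - x ^ 2) ^ m else 0 with hd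
  have hd_nonneg : ∀ x, 0 ≤ d x := by
    intro x
    rw [hd]
    dsimp only
    split
    · next h =>
      have h1 : (0:ℝ) ≤ 1 - x^2 := by nlinarith [h.1, h.2]
      exact mul_nonneg (mul_nonneg (by positivity) h.1) (pow_nonneg h1 m)
    · exact le_refl 0
  have hd_meas : Measurable d := by
    apply Measurable.ite
    · exact measurableSet_le measurable_const measurable_id |>.inter
        (measurableSet_le measurable_id measurable_const)
    · fun_prop
    · exact measurable_const
  -- rewrite the ENNReal density
  have hdens : (fun x => if 0 ≤ x ∧ x ≤ 1 then
        ENNReal.ofReal (2 * (((m+2:ℕ) : ℝ) - 1) * x * (1 - x ^ 2) ^ (m+2-2)) else 0)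
      = fun x => ((fun y => (d y).toNNReal) x : ℝ≥0∞) := by
    ext x
    rw [hd]
    simp only [hcast, hm22]
    split
    · rfl
    · simp
  -- the target function
  set g : ℝ → ℝ := fun x => Real.logb 2 (x ^ β) with hg
  have hg_meas : Measurable g := by
    have : g = fun x => Real.log (x ^ β) / Real.log 2 := rfl
    rw [this]
    exact (Real.measurable_log.comp (Real.continuous_rpow_const hβ.le).measurable).div_const _
  -- pointwise identity on Icc 0 1
  have hEq : ∀ x ∈ Set.Icc (0:ℝ) 1,
      d x * g x = (β / Real.log 2) * (2 * ((m:ℝ)+1) * x * (1 - x^2)^m * Real.log x) := by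
    intro x hx
    rw [Set.mem_Icc] at hx
    rw [hd]
    simp only [hx.1, hx.2, and_self, if_true]
    rcases eq_or_lt_of_le hx.1 with h0 | h0
    · rw [← h0]; simp [hg, Real.zero_rpow hβ.ne']
    · rw [hg]
      dsimp only
      have : Real.logb 2 (x ^ β) = β * Real.log x / Real.log 2 := by
        rw [Real.logb, Real.log_rpow h0]
      rw [this]
      ring
  -- continuity of the RHS
  have hcontR : Continuous fun x : ℝ =>
      (β / Real.log 2) * (2 * ((m:ℝ)+1) * x * (1 - x^2)^m * Real.log x) := by
    have hfx : (fun x : ℝ => (β / Real.log 2) * (2 * ((m:ℝ)+1) * x * (1 - x^2)^m * Real.log x))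
        = fun x => ((β / Real.log 2) * (2 * ((m:ℝ)+1)) * (1 - x^2)^m) * (x * Real.log x) := by
      ext x; ring
    rw [hfx]
    exact (Continuous.mul (by fun_prop) (by fun_prop)).mul Real.continuous_mul_log
  -- integrability over volume of d * g
  have hInd : (fun x => d x * g x)
      = (Set.Icc (0:ℝ) 1).indicator (fun x => d x * g x) := by
    ext x
    rw [Set.indicator_apply]
    split
    · rfl
    · next h =>
      rw [Set.mem_Icc] at h
      rw [hd]
      simp only [h, if_false]
      ring
  have hint_vol : Integrable (fun x => d x * g x) volume := by
    rw [hInd]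
    rw [integrable_indicator_iff measurableSet_Icc]
    apply MeasureTheory.IntegrableOn.congr_fun (hcontR.integrableOn_Icc)
    · intro x hx; exact (hEq x hx).symm
    · exact measurableSet_Icc
  -- Integrability w.r.t. μ
  have hint_wd : Integrable g (volume.withDensity (fun x => ((d x).toNNReal : ℝ≥0∞))) := by
    rw [integrable_withDensity_iff_integrable_smul (hd_meas.real_toNNReal)]
    apply hint_vol.congr
    filter_upwards with x
    rw [NNReal.smul_def, smul_eq_mul, Real.coe_toNNReal _ (hd_nonneg x), mul_comm]
  have hint : Integrable (fun ω => g (X ω)) μ := by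
    have h1 : Integrable g (μ.map X) := by rw [hmap, hdens]; exact hint_wd
    exact (integrable_map_measure hg_meas.aestronglyMeasurable hX.aemeasurable).mp h1
  constructor
  · exact hint
  -- the integral computation
  have hint_eq : ∫ ω, g (X ω) ∂μ = ∫ x, g x ∂(μ.map X) := by
    rw [integral_map hX.aemeasurable hg_meas.aestronglyMeasurable]
  rw [hint_eq, hmap, hdens, integral_withDensity_eq_integral_smul (hd_meas.real_toNNReal)]
  have hsmul : ∀ x, (d x).toNNReal • g x = d x * g x := by
    intro x
    rw [NNReal.smul_def, smul_eq_mul, Real.coe_toNNReal _ (hd_nonneg x)]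
  simp_rw [hsmul]
  rw [hInd, MeasureTheory.integral_indicator measurableSet_Icc,
    MeasureTheory.integral_Icc_eq_integral_Ioc,
    ← intervalIntegral.integral_of_le (zero_le_one)]
  rw [intervalIntegral.integral_congr (g := fun x =>
      (β / Real.log 2) * (2 * ((m:ℝ)+1) * x * (1 - x^2)^m * Real.log x))
      (fun x hx => hEq x (by rwa [Set.uIcc_of_le zero_le_one] at hx))]
  rw [intervalIntegral.integral_const_mul, key_integral m, hm12]
  ring


/-- In a single-tier network where the distance ratios `X_ℓ`
have density `2(ℓ-1)x(1-x²)^{ℓ-2}` on `[0,1]` and `δ_ℓ = X_ℓ^β`, the expected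
geometry-dependent feedback allocation equals the geometry-independent one:
`E[B_total/(L-1) + (L-1) log₂ δ_ℓ − ∑_j log₂ δ_j]
 = B_total/(L-1) − (β(L-1)/(2 ln 2)) H_{ℓ-1} + (β/(2 ln 2)) ∑_j H_{j-1}`,
and these values sum over `ℓ = 2, …, L` to `B_total`. -/
theorem expected_coop_allocation
    {Ω : Type*} [MeasurableSpace Ω] {μ : Measure Ω} [IsProbabilityMeasure μ]
    (L : ℕ) (hL : 2 ≤ L) (β : ℝ) (hβ : 0 < β) (Btotal : ℝ)
    (X : ℕ → Ω → ℝ) (hX : ∀ ℓ ∈ Finset.Icc 2 L, Measurable (X ℓ))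
    (hXdist : ∀ ℓ ∈ Finset.Icc 2 L, μ.map (X ℓ) =
      volume.withDensity (fun x =>
        if 0 ≤ x ∧ x ≤ 1 then
          ENNReal.ofReal (2 * ((ℓ : ℝ) - 1) * x * (1 - x ^ 2) ^ (ℓ - 2))
        else 0)) :
    (∀ ℓ ∈ Finset.Icc 2 L,
      ∫ ω, (Btotal / ((L : ℝ) - 1)
          + ((L : ℝ) - 1) * Real.logb 2 (X ℓ ω ^ β)
          - ∑ j ∈ Finset.Icc 2 L, Real.logb 2 (X j ω ^ β)) ∂μ
        = Btotal / ((L : ℝ) - 1)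
            - (β * ((L : ℝ) - 1) / (2 * Real.log 2)) * harmonicNum (ℓ - 1)
            + (β / (2 * Real.log 2)) * ∑ j ∈ Finset.Icc 2 L, harmonicNum (j - 1)) ∧
    ∑ ℓ ∈ Finset.Icc 2 L,
        (Btotal / ((L : ℝ) - 1)
          - (β * ((L : ℝ) - 1) / (2 * Real.log 2)) * harmonicNum (ℓ - 1)
          + (β / (2 * Real.log 2)) * ∑ j ∈ Finset.Icc 2 L, harmonicNum (j - 1))
      = Btotal := by
  
  have key : ∀ j ∈ Finset.Icc 2 L,
      Integrable (fun ω => Real.logb 2 (X j ω ^ β)) μ ∧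
      ∫ ω, Real.logb 2 (X j ω ^ β) ∂μ
        = -(β / (2 * Real.log 2)) * harmonicNum (j - 1) := by
    intro j hj
    exact dist_lemma j (Finset.mem_Icc.mp hj).1 β hβ (X j) (hX j hj) (hXdist j hj)
  constructor
  · intro ℓ hℓ
    have hint_sum : Integrable (fun ω => ∑ j ∈ Finset.Icc 2 L,
        Real.logb 2 (X j ω ^ β)) μ :=
      integrable_finset_sum _ (fun j hj => (key j hj).1)
    have hint1 : Integrable (fun ω => Btotal / ((L : ℝ) - 1)
        + ((L : ℝ) - 1) * Real.logb 2 (X ℓ ω ^ β)) μ :=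
      (integrable_const _).add (((key ℓ hℓ).1).const_mul _)
    rw [integral_sub hint1 hint_sum, integral_add (integrable_const _)
      (((key ℓ hℓ).1).const_mul _), MeasureTheory.integral_const, MeasureTheory.integral_const_mul,
      integral_finset_sum _ (fun j hj => (key j hj).1), (key ℓ hℓ).2]
    have hsum : ∑ j ∈ Finset.Icc 2 L, ∫ ω, Real.logb 2 (X j ω ^ β) ∂μ
        = -(β / (2 * Real.log 2)) * ∑ j ∈ Finset.Icc 2 L, harmonicNum (j - 1) := by
      rw [Finset.mul_sum]
      exact Finset.sum_congr rfl (fun j hj => (key j hj).2)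
    rw [hsum]
    simp only [measure_univ, probReal_univ, ENNReal.toReal_one, one_smul]
    ring
  · have hcard : (Finset.Icc 2 L).card = L - 1 := by rw [Nat.card_Icc]; omega
    have hL1 : ((L : ℝ) - 1) ≠ 0 := by
      have : (2:ℝ) ≤ (L:ℝ) := by exact_mod_cast hL
      linarith
    have hLcast : ((L - 1 : ℕ) : ℝ) = (L : ℝ) - 1 := by
      rw [Nat.cast_sub (by omega)]; norm_num
    rw [Finset.sum_add_distrib, Finset.sum_sub_distrib, Finset.sum_const, Finset.sum_const,
      hcard, nsmul_eq_mul, nsmul_eq_mul, hLcast, ← Finset.mul_sum]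
    field_simp
    ring
end

section
/- Let L ≥ 2 be an integer, β > 0 a real, and B_total ≥ 0 a real. Define B̃_L = B_total/(L−1) − (β(L−1)/(2 ln 2))·H_{L−1} + (β/(2 ln 2))·Σ_{ℓ=2}^{L} H_{ℓ−1}. If B̃_L ≤ 1, then L ≥ (ln 2/β)·√( (2β/ln 2)·B_total + 1 ) − ln 2/β + 1. -/
open Real Finset

lemma harmonicNum_succ (n : ℕ) : harmonicNum (n+1) = harmonicNum n + 1/((n:ℝ)+1) := by
  simp [harmonicNum, Finset.sum_range_succ]

lemma harmonic_ge_one (n : ℕ) (hn : 1 ≤ n) : 1 ≤ harmonicNum n := by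
  have h0 : (0:ℕ) ∈ Finset.range n := Finset.mem_range.mpr hn
  have := Finset.single_le_sum (f := fun i : ℕ => (1:ℝ)/(i+1))
    (fun i _ => by positivity) h0
  simpa [harmonicNum] using this

lemma sum_harmonic (n : ℕ) :
    ∑ k ∈ Finset.range n, harmonicNum (k+1) = ((n:ℝ)+1) * harmonicNum n - n := by
  induction n with
  | zero => simp [harmonicNum]
  | succ m ih =>
    rw [Finset.sum_range_succ, ih, harmonicNum_succ]
    push_cast
    have hm : ((m:ℝ)+1) ≠ 0 := by positivity
    field_simp
    ring

lemma icc_sum_harmonic (n : ℕ) :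
    ∑ ℓ ∈ Finset.Icc 2 (n+1), harmonicNum (ℓ - 1)
      = ∑ k ∈ Finset.range n, harmonicNum (k+1) := by
  induction n with
  | zero => simp
  | succ m ih =>
    rw [show m + 1 + 1 = (m + 1) + 1 from rfl,
      Finset.sum_Icc_succ_top (by omega), ih, Finset.sum_range_succ]
    norm_num

/-- If the feedback
`B̃_L = B_total/(L-1) − (β(L-1)/(2 ln 2)) H_{L-1} + (β/(2 ln 2)) ∑_{ℓ=2}^L H_{ℓ-1}`
allocated to the furthest intra-cluster base station satisfies `B̃_L ≤ 1`, then
the cluster size satisfies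
`L ≥ (ln 2/β)·√((2β/ln 2)·B_total + 1) − ln 2/β + 1`. -/
theorem effective_cluster_size_lower_bound
    (L : ℕ) (hL : 2 ≤ L) (β : ℝ) (hβ : 0 < β) (Btotal : ℝ) (hBtotal : 0 ≤ Btotal)
    (hBL : Btotal / ((L : ℝ) - 1)
        - (β * ((L : ℝ) - 1) / (2 * Real.log 2)) * harmonicNum (L - 1)
        + (β / (2 * Real.log 2)) * ∑ ℓ ∈ Finset.Icc 2 L, harmonicNum (ℓ - 1)
      ≤ 1) :
    (Real.log 2 / β) * Real.sqrt ((2 * β / Real.log 2) * Btotal + 1)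
        - Real.log 2 / β + 1
      ≤ (L : ℝ) := by
  have hl2 : 0 < Real.log 2 := Real.log_pos (by norm_num)
  set l2 := Real.log 2 with hl2def
  set r := β / l2 with hr
  have hrpos : 0 < r := by positivity
  obtain ⟨n, rfl⟩ : ∃ n, L = n + 1 := ⟨L - 1, by omega⟩
  have hn1 : 1 ≤ n := by omega
  have hnpos : (0:ℝ) < (n:ℝ) := by exact_mod_cast hn1
  have hsum : ∑ ℓ ∈ Finset.Icc 2 (n+1), harmonicNum (ℓ - 1)
      = ((n:ℝ)+1) * harmonicNum n - n := by
    rw [icc_sum_harmonic, sum_harmonic]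
  have hcast : ((n+1 : ℕ) : ℝ) = (n:ℝ) + 1 := by push_cast; ring
  have hLsub : (n+1) - 1 = n := by omega
  rw [hcast, hLsub, hsum] at hBL
  have hone : (n:ℝ) + 1 - 1 = (n:ℝ) := by ring
  rw [hone] at hBL
  have hH : 1 ≤ harmonicNum n := harmonic_ge_one n hn1
  -- hBL : Btotal/n - (β n/(2l2)) H_n + (β/(2l2)) ((n+1) H_n - n) ≤ 1
  have hBL' : Btotal / (n:ℝ) ≤ 1 + r/2 * ((n:ℝ) - 1) := by
    have hrw : (β * (n:ℝ) / (2 * l2)) * harmonicNum n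
        - (β / (2 * l2)) * (((n:ℝ)+1) * harmonicNum n - n)
        = r/2 * ((n:ℝ) - harmonicNum n) := by
      rw [hr]; field_simp; ring
    have hmono : r/2 * ((n:ℝ) - harmonicNum n) ≤ r/2 * ((n:ℝ) - 1) := by
      have h0 : (0:ℝ) ≤ r/2 := by positivity
      nlinarith
    linarith [hBL, hrw, hmono]
  have hkey : Btotal ≤ r/2 * (n:ℝ)^2 + (n:ℝ) := by
    have h1 := (div_le_iff₀ hnpos).mp hBL'
    nlinarith [mul_nonneg (le_of_lt hrpos) (le_of_lt hnpos)]
  have hsq : (2 * β / l2) * Btotal + 1 ≤ (r * (n:ℝ) + 1)^2 := by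
    have h2r : (0:ℝ) ≤ 2 * r := by positivity
    have hm := mul_le_mul_of_nonneg_left hkey h2r
    have hrr : 2 * β / l2 = 2 * r := by rw [hr]; ring
    rw [hrr]
    nlinarith [hm]
  have hsqrt : Real.sqrt ((2 * β / l2) * Btotal + 1) ≤ r * (n:ℝ) + 1 := by
    have h0 : (0:ℝ) ≤ r * (n:ℝ) + 1 := by positivity
    calc Real.sqrt ((2 * β / l2) * Btotal + 1)
        ≤ Real.sqrt ((r * (n:ℝ) + 1)^2) := Real.sqrt_le_sqrt hsq
      _ = r * (n:ℝ) + 1 := Real.sqrt_sq h0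
  have hc : 0 < l2 / β := by positivity
  have hmul := mul_le_mul_of_nonneg_left hsqrt (le_of_lt hc)
  have hid : (l2/β) * (r * (n:ℝ) + 1) = (n:ℝ) + l2/β := by
    rw [hr]
    field_simp
  rw [hid] at hmul
  push_cast
  linarith
end
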